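/- arXiv:2502.03320 — 3 statements merged into one kernel-verified Lean document; each statement's English description precedes it below -/
import Mathlib

section
/- For every closed term p of sort Proc of the imperative process algebra deACPei, there exists a head normal form q such that the equation p = q is derivable from the axioms of deACPei. -/
/-!
A formalization of the imperative process algebra deACPei from
"Rely/Guarantee Logic and Imperative Process Algebra".

Data is modelled semantically: data terms of sort `Data` are functions from
flexible-variable valuations to elements of the carrier `D` of sort `Data` of
the data algebra `𝔇`, and condition terms are functions from valuations to
propositions.  (This identifies data terms, respectively condition terms, that
are provably equal, respectively equivalent, in `𝔇`, exactly as the axioms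
IMP1 and IMP2 of deACPei do.)
-/

namespace DeACPei

open scoped Classical

variable {A V D : Type}

/-- flexible variable valuations -/
abbrev Val (V D : Type) : Type := V → D

/-- data terms of sort `Data` (modelled semantically) -/
abbrev Expr (V D : Type) : Type := (V → D) → D

/-- condition terms of sort `Cond` over current-value flexible variable
constants (modelled semantically) -/
abbrev Cond (V D : Type) : Type := (V → D) → Prop

/-- condition terms of sort `Cond` over current-value and previous-value
flexible variable constants; the first argument provides the current values,
the second the previous values -/
abbrev Cond2 (V D : Type) : Type := (V → D) → (V → D) → Prop

/-- the flexible variable valuation `ρ⟨d/v⟩` -/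
noncomputable def upd (ρ : Val V D) (v : V) (d : D) : Val V D :=
  fun w => if w = v then d else ρ w

/-- the data term denoting a fixed value `d` -/
def constE (d : D) : Expr V D := fun _ => d

/-- atomic process terms: basic actions, data-parameterized actions
`a(e₁,…,eₙ)` (with `n ≥ 1`), and assignment actions `v := e` -/
inductive Atom (A V D : Type) : Type where
  | basic : A → Atom A V D
  | param : A → Expr V D → List (Expr V D) → Atom A V D
  | assign : V → Expr V D → Atom A V D

/-- whether an atomic process term is an assignment action -/
def Atom.isAssign : Atom A V D → Prop
  | .assign _ _ => True
  | _ => False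

/-- evaluation of an atomic process term under a flexible variable valuation -/
def Atom.evalA (ρ : Val V D) : Atom A V D → Atom A V D
  | .basic a => .basic a
  | .param a e es => .param a (constE (e ρ)) (es.map fun f => constE (f ρ))
  | .assign v e => .assign v (constE (e ρ))

/-- closed process terms of deACPei -/
inductive P (A V D : Type) : Type where
  | atom : Atom A V D → P A V D
  | delta : P A V D
  | eps : P A V D
  | alt : P A V D → P A V D → P A V D
  | seq : P A V D → P A V D → P A V D
  | iter : P A V D → P A V D → P A V D
  | par : P A V D → P A V D → P A V D
  | lmerge : P A V D → P A V D → P A V D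
  | cmerge : P A V D → P A V D → P A V D
  | encap : Set A → P A V D → P A V D
  | gc : Cond V D → P A V D → P A V D
  | eval : Val V D → P A V D → P A V D

/-- the successful termination relation `t ↓ ρ` of the structural operational
semantics of deACPei -/
inductive Term : P A V D → Val V D → Prop where
  | eps : ∀ {ρ : Val V D}, Term .eps ρ
  | altL : ∀ {x y : P A V D} {ρ}, Term x ρ → Term (.alt x y) ρ
  | altR : ∀ {x y : P A V D} {ρ}, Term y ρ → Term (.alt x y) ρ
  | seq : ∀ {x y : P A V D} {ρ}, Term x ρ → Term y ρ → Term (.seq x y) ρ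
  | iter : ∀ {x y : P A V D} {ρ}, Term y ρ → Term (.iter x y) ρ
  | par : ∀ {x y : P A V D} {ρ}, Term x ρ → Term y ρ → Term (.par x y) ρ
  | encap : ∀ {x : P A V D} {H ρ}, Term x ρ → Term (.encap H x) ρ
  | gc : ∀ {x : P A V D} {φ : Cond V D} {ρ}, φ ρ → Term x ρ → Term (.gc φ x) ρ
  | eval : ∀ {x : P A V D} {ρ ρ'}, Term x ρ → Term (.eval ρ x) ρ'

/-- the transition relation `t —(ρ,α)→ t′` of the structural operational
semantics of deACPei, relative to the communication function `γ` (with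
`γ a b = none` meaning that the communication of `a` and `b` is `δ`) -/
inductive Step (γ : A → A → Option A) :
    P A V D → Val V D → Atom A V D → P A V D → Prop where
  | atom : ∀ {α : Atom A V D} {ρ}, Step γ (.atom α) ρ α .eps
  | altL : ∀ {x y x' : P A V D} {ρ α}, Step γ x ρ α x' → Step γ (.alt x y) ρ α x'
  | altR : ∀ {x y y' : P A V D} {ρ α}, Step γ y ρ α y' → Step γ (.alt x y) ρ α y'
  | seqL : ∀ {x y x' : P A V D} {ρ α},
      Step γ x ρ α x' → Step γ (.seq x y) ρ α (.seq x' y)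
  | seqR : ∀ {x y y' : P A V D} {ρ α},
      Term x ρ → Step γ y ρ α y' → Step γ (.seq x y) ρ α y'
  | iterExit : ∀ {x y y' : P A V D} {ρ α},
      Step γ y ρ α y' → Step γ (.iter x y) ρ α y'
  | iterLoop : ∀ {x y x' : P A V D} {ρ α},
      Step γ x ρ α x' → Step γ (.iter x y) ρ α (.seq x' (.iter x y))
  | parL : ∀ {x y x' : P A V D} {ρ α},
      Step γ x ρ α x' → Step γ (.par x y) ρ α (.par x' y)
  | parR : ∀ {x y y' : P A V D} {ρ α},
      Step γ y ρ α y' → Step γ (.par x y) ρ α (.par x y')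
  | parC : ∀ {x y x' y' : P A V D} {ρ a b c},
      Step γ x ρ (.basic a) x' → Step γ y ρ (.basic b) y' → γ a b = some c →
      Step γ (.par x y) ρ (.basic c) (.par x' y')
  | parCD : ∀ {x y x' y' : P A V D} {ρ a b c e e' es es'},
      Step γ x ρ (.param a e es) x' → Step γ y ρ (.param b e' es') y' →
      γ a b = some c → e ρ = e' ρ →
      List.Forall₂ (fun (f g : Expr V D) => f ρ = g ρ) es es' →
      Step γ (.par x y) ρ (.param c e es) (.par x' y')
  | lmerge : ∀ {x y x' : P A V D} {ρ α},
      Step γ x ρ α x' → Step γ (.lmerge x y) ρ α (.par x' y)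
  | cmergeC : ∀ {x y x' y' : P A V D} {ρ a b c},
      Step γ x ρ (.basic a) x' → Step γ y ρ (.basic b) y' → γ a b = some c →
      Step γ (.cmerge x y) ρ (.basic c) (.par x' y')
  | cmergeCD : ∀ {x y x' y' : P A V D} {ρ a b c e e' es es'},
      Step γ x ρ (.param a e es) x' → Step γ y ρ (.param b e' es') y' →
      γ a b = some c → e ρ = e' ρ →
      List.Forall₂ (fun (f g : Expr V D) => f ρ = g ρ) es es' →
      Step γ (.cmerge x y) ρ (.param c e es) (.par x' y')
  | encapB : ∀ {x x' : P A V D} {H ρ a},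
      Step γ x ρ (.basic a) x' → a ∉ H →
      Step γ (.encap H x) ρ (.basic a) (.encap H x')
  | encapP : ∀ {x x' : P A V D} {H ρ a e es},
      Step γ x ρ (.param a e es) x' → a ∉ H →
      Step γ (.encap H x) ρ (.param a e es) (.encap H x')
  | encapA : ∀ {x x' : P A V D} {H ρ v e},
      Step γ x ρ (.assign v e) x' →
      Step γ (.encap H x) ρ (.assign v e) (.encap H x')
  | gc : ∀ {x x' : P A V D} {φ : Cond V D} {ρ α},
      φ ρ → Step γ x ρ α x' → Step γ (.gc φ x) ρ α x'
  | evalB : ∀ {x x' : P A V D} {ρ ρ' a},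
      Step γ x ρ (.basic a) x' →
      Step γ (.eval ρ x) ρ' (.basic a) (.eval ρ x')
  | evalP : ∀ {x x' : P A V D} {ρ ρ' a e es},
      Step γ x ρ (.param a e es) x' →
      Step γ (.eval ρ x) ρ'
        (.param a (constE (e ρ)) (es.map fun f => constE (f ρ))) (.eval ρ x')
  | evalA : ∀ {x x' : P A V D} {ρ ρ' v e},
      Step γ x ρ (.assign v e) x' →
      Step γ (.eval ρ x) ρ' (.assign v (constE (e ρ)))
        (.eval (upd ρ v (e ρ)) x')

/-- data equivalence of atomic process terms (`≃`) -/
inductive DataEq : Atom A V D → Atom A V D → Prop where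
  | basic : ∀ {a : A}, DataEq (.basic a) (.basic a)
  | param : ∀ {a : A} {e e' : Expr V D} {es es' : List (Expr V D)},
      (∀ ρ, e ρ = e' ρ) →
      List.Forall₂ (fun (f g : Expr V D) => ∀ ρ, f ρ = g ρ) es es' →
      DataEq (.param a e es) (.param a e' es')
  | assign : ∀ {v : V} {e e' : Expr V D},
      (∀ ρ, e ρ = e' ρ) → DataEq (.assign v e) (.assign v e')

/-- `R` is a bisimulation (with transitions matched up to data equivalence) -/
def IsBisim (γ : A → A → Option A) (R : P A V D → P A V D → Prop) : Prop :=
  ∀ t1 t2, R t1 t2 →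
    (∀ ρ α t1', Step γ t1 ρ α t1' →
        ∃ α' t2', DataEq α α' ∧ Step γ t2 ρ α' t2' ∧ R t1' t2') ∧
    (∀ ρ α t2', Step γ t2 ρ α t2' →
        ∃ α' t1', DataEq α α' ∧ Step γ t1 ρ α' t1' ∧ R t1' t2') ∧
    (∀ ρ, Term t1 ρ ↔ Term t2 ρ)

/-- bisimulation equivalence `t1 ↔ t2` -/
def Bisim (γ : A → A → Option A) (t1 t2 : P A V D) : Prop :=
  ∃ R, IsBisim γ R ∧ R t1 t2

/-- a member of `Act ∪ {δ}` as a process term -/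
def ofOptA : Option A → P A V D
  | some a => .atom (.basic a)
  | none => .delta

/-- a member of `AProcTerm ∪ {δ}` as a process term -/
def ofOptAtom : Option (Atom A V D) → P A V D
  | some α => .atom α
  | none => .delta

/-- the communication function extended to `Act ∪ {δ}` -/
def γe (γ : A → A → Option A) : Option A → Option A → Option A
  | some a, some b => γ a b
  | _, _ => none

/-- the (unconditional) equational axioms of deACPei -/
inductive Ax (γ : A → A → Option A) : P A V D → P A V D → Prop where
  | a1 : ∀ x y : P A V D, Ax γ (.alt x y) (.alt y x)
  | a2 : ∀ x y z : P A V D, Ax γ (.alt (.alt x y) z) (.alt x (.alt y z))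
  | a3 : ∀ x : P A V D, Ax γ (.alt x x) x
  | a4 : ∀ x y z : P A V D, Ax γ (.seq (.alt x y) z) (.alt (.seq x z) (.seq y z))
  | a5 : ∀ x y z : P A V D, Ax γ (.seq (.seq x y) z) (.seq x (.seq y z))
  | a6 : ∀ x : P A V D, Ax γ (.alt x .delta) x
  | a7 : ∀ x : P A V D, Ax γ (.seq .delta x) .delta
  | a8 : ∀ x : P A V D, Ax γ (.seq x .eps) x
  | a9 : ∀ x : P A V D, Ax γ (.seq .eps x) x
  | cm1e : ∀ x y : P A V D,
      Ax γ (.par x y)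
        (.alt (.alt (.alt (.lmerge x y) (.lmerge y x)) (.cmerge x y))
          (.seq (.encap Set.univ x) (.encap Set.univ y)))
  | cm2e : ∀ x : P A V D, Ax γ (.lmerge .eps x) .delta
  | cm3 : ∀ (α : Option (Atom A V D)) (x y : P A V D),
      Ax γ (.lmerge (.seq (ofOptAtom α) x) y) (.seq (ofOptAtom α) (.par x y))
  | cm4 : ∀ x y z : P A V D,
      Ax γ (.lmerge (.alt x y) z) (.alt (.lmerge x z) (.lmerge y z))
  | cm5e : ∀ x : P A V D, Ax γ (.cmerge .eps x) .delta
  | cm6e : ∀ x : P A V D, Ax γ (.cmerge x .eps) .delta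
  | cm7 : ∀ (a b : Option A) (x y : P A V D),
      Ax γ (.cmerge (.seq (ofOptA a) x) (.seq (ofOptA b) y))
        (.seq (ofOptA (γe γ a b)) (.par x y))
  | cm8 : ∀ x y z : P A V D,
      Ax γ (.cmerge (.alt x y) z) (.alt (.cmerge x z) (.cmerge y z))
  | cm9 : ∀ x y z : P A V D,
      Ax γ (.cmerge x (.alt y z)) (.alt (.cmerge x y) (.cmerge x z))
  | d0 : ∀ H : Set A, Ax γ (.encap H .eps) .eps
  | d1 : ∀ {H : Set A} {a : A}, a ∉ H →
      Ax γ (.encap H (.atom (.basic a))) (.atom (.basic a))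
  | d2 : ∀ {H : Set A} {a : A}, a ∈ H →
      Ax γ (.encap H (.atom (.basic a))) .delta
  | d3 : ∀ (H : Set A) (x y : P A V D),
      Ax γ (.encap H (.alt x y)) (.alt (.encap H x) (.encap H y))
  | d4 : ∀ (H : Set A) (x y : P A V D),
      Ax γ (.encap H (.seq x y)) (.seq (.encap H x) (.encap H y))
  | bks1 : ∀ x y : P A V D, Ax γ (.iter x y) (.alt (.seq x (.iter x y)) y)
  | bks5 : ∀ x y : P A V D, Ax γ (.iter (.alt x .eps) y) (.iter x y)
  | gc1 : ∀ x : P A V D, Ax γ (.gc (fun _ => True) x) x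
  | gc2 : ∀ x : P A V D, Ax γ (.gc (fun _ => False) x) .delta
  | gc3 : ∀ φ : Cond V D, Ax γ (.gc φ .delta) .delta
  | gc4 : ∀ (φ : Cond V D) (x y : P A V D),
      Ax γ (.gc φ (.alt x y)) (.alt (.gc φ x) (.gc φ y))
  | gc5 : ∀ (φ : Cond V D) (x y : P A V D),
      Ax γ (.gc φ (.seq x y)) (.seq (.gc φ x) y)
  | gc6 : ∀ (φ ψ : Cond V D) (x : P A V D),
      Ax γ (.gc φ (.gc ψ x)) (.gc (fun ρ => φ ρ ∧ ψ ρ) x)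
  | gc7 : ∀ (φ ψ : Cond V D) (x : P A V D),
      Ax γ (.gc (fun ρ => φ ρ ∨ ψ ρ) x) (.alt (.gc φ x) (.gc ψ x))
  | gc8 : ∀ (φ : Cond V D) (x y : P A V D),
      Ax γ (.lmerge (.gc φ x) y) (.gc φ (.lmerge x y))
  | gc9 : ∀ (φ : Cond V D) (x y : P A V D),
      Ax γ (.cmerge (.gc φ x) y) (.gc φ (.cmerge x y))
  | gc10 : ∀ (φ : Cond V D) (x y : P A V D),
      Ax γ (.cmerge x (.gc φ y)) (.gc φ (.cmerge x y))
  | gc11 : ∀ (H : Set A) (φ : Cond V D) (x : P A V D),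
      Ax γ (.encap H (.gc φ x)) (.gc φ (.encap H x))
  | v0 : ∀ ρ : Val V D, Ax γ (.eval ρ .eps) .eps
  | v1 : ∀ (ρ : Val V D) (α : Option A) (x : P A V D),
      Ax γ (.eval ρ (.seq (ofOptA α) x)) (.seq (ofOptA α) (.eval ρ x))
  | v2 : ∀ (ρ : Val V D) (a : A) (e : Expr V D) (es : List (Expr V D)) (x : P A V D),
      Ax γ (.eval ρ (.seq (.atom (.param a e es)) x))
        (.seq (.atom (.param a (constE (e ρ)) (es.map fun f => constE (f ρ))))
          (.eval ρ x))
  | v3 : ∀ (ρ : Val V D) (v : V) (e : Expr V D) (x : P A V D),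
      Ax γ (.eval ρ (.seq (.atom (.assign v e)) x))
        (.seq (.atom (.assign v (constE (e ρ)))) (.eval (upd ρ v (e ρ)) x))
  | v4 : ∀ (ρ : Val V D) (x y : P A V D),
      Ax γ (.eval ρ (.alt x y)) (.alt (.eval ρ x) (.eval ρ y))
  | v5 : ∀ (ρ : Val V D) (φ : Cond V D) (x : P A V D),
      Ax γ (.eval ρ (.gc φ x)) (.gc (fun _ => φ ρ) (.eval ρ x))
  | cm7da : ∀ {a b c : A} {e e' : Expr V D} {es es' : List (Expr V D)}
      (x y : P A V D), γ a b = some c → es.length = es'.length →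
      Ax γ (.cmerge (.seq (.atom (.param a e es)) x)
              (.seq (.atom (.param b e' es')) y))
        (.gc (fun ρ => e ρ = e' ρ ∧
                List.Forall₂ (fun (f g : Expr V D) => f ρ = g ρ) es es')
          (.seq (.atom (.param c e es)) (.par x y)))
  | cm7db : ∀ {a b : A} {e e' : Expr V D} {es es' : List (Expr V D)}
      (x y : P A V D), (γ a b = none ∨ es.length ≠ es'.length) →
      Ax γ (.cmerge (.seq (.atom (.param a e es)) x)
              (.seq (.atom (.param b e' es')) y)) .delta
  | cm7dc : ∀ {a : A} {e : Expr V D} {es : List (Expr V D)}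
      (α : Option (Atom A V D)) (x y : P A V D),
      (∀ (b : A) (f : Expr V D) (fs : List (Expr V D)), α ≠ some (.param b f fs)) →
      Ax γ (.cmerge (.seq (.atom (.param a e es)) x) (.seq (ofOptAtom α) y)) .delta
  | cm7dd : ∀ {a : A} {e : Expr V D} {es : List (Expr V D)}
      (α : Option (Atom A V D)) (x y : P A V D),
      (∀ (b : A) (f : Expr V D) (fs : List (Expr V D)), α ≠ some (.param b f fs)) →
      Ax γ (.cmerge (.seq (ofOptAtom α) x) (.seq (.atom (.param a e es)) y)) .delta
  | cm7de : ∀ {v : V} {e : Expr V D} (α : Option (Atom A V D)) (x y : P A V D),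
      Ax γ (.cmerge (.seq (.atom (.assign v e)) x) (.seq (ofOptAtom α) y)) .delta
  | cm7df : ∀ {v : V} {e : Expr V D} (α : Option (Atom A V D)) (x y : P A V D),
      Ax γ (.cmerge (.seq (ofOptAtom α) x) (.seq (.atom (.assign v e)) y)) .delta
  | d1da : ∀ {H : Set A} {a : A} {e : Expr V D} {es : List (Expr V D)}, a ∉ H →
      Ax γ (.encap H (.atom (.param a e es))) (.atom (.param a e es))
  | d2d : ∀ {H : Set A} {a : A} {e : Expr V D} {es : List (Expr V D)}, a ∈ H →
      Ax γ (.encap H (.atom (.param a e es))) .delta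
  | d1db : ∀ (H : Set A) (v : V) (e : Expr V D),
      Ax γ (.encap H (.atom (.assign v e))) (.atom (.assign v e))

/-- derivability of an equation between closed process terms from the axioms
of deACPei in conditional equational logic -/
inductive Deriv (γ : A → A → Option A) : P A V D → P A V D → Prop where
  | ax : ∀ {p q : P A V D}, Ax γ p q → Deriv γ p q
  | refl : ∀ p : P A V D, Deriv γ p p
  | symm : ∀ {p q : P A V D}, Deriv γ p q → Deriv γ q p
  | trans : ∀ {p q r : P A V D}, Deriv γ p q → Deriv γ q r → Deriv γ p r
  | altC : ∀ {p q p' q' : P A V D},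
      Deriv γ p q → Deriv γ p' q' → Deriv γ (.alt p p') (.alt q q')
  | seqC : ∀ {p q p' q' : P A V D},
      Deriv γ p q → Deriv γ p' q' → Deriv γ (.seq p p') (.seq q q')
  | iterC : ∀ {p q p' q' : P A V D},
      Deriv γ p q → Deriv γ p' q' → Deriv γ (.iter p p') (.iter q q')
  | parC : ∀ {p q p' q' : P A V D},
      Deriv γ p q → Deriv γ p' q' → Deriv γ (.par p p') (.par q q')
  | lmergeC : ∀ {p q p' q' : P A V D},
      Deriv γ p q → Deriv γ p' q' → Deriv γ (.lmerge p p') (.lmerge q q')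
  | cmergeC : ∀ {p q p' q' : P A V D},
      Deriv γ p q → Deriv γ p' q' → Deriv γ (.cmerge p p') (.cmerge q q')
  | encapC : ∀ {p q : P A V D} (H : Set A),
      Deriv γ p q → Deriv γ (.encap H p) (.encap H q)
  | gcC : ∀ {p q : P A V D} (φ : Cond V D),
      Deriv γ p q → Deriv γ (.gc φ p) (.gc φ q)
  | evalC : ∀ {p q : P A V D} (ρ : Val V D),
      Deriv γ p q → Deriv γ (.eval ρ p) (.eval ρ q)
  | rspE : ∀ {x y z : P A V D},
      Deriv γ (.encap Set.univ x) .delta → Deriv γ z (.alt (.seq x z) y) →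
      Deriv γ z (.iter x y)

/-- derivability of an equation between closed process terms from the axioms
A1 and A2 alone -/
inductive DerivAC : P A V D → P A V D → Prop where
  | a1 : ∀ x y : P A V D, DerivAC (.alt x y) (.alt y x)
  | a2 : ∀ x y z : P A V D, DerivAC (.alt (.alt x y) z) (.alt x (.alt y z))
  | refl : ∀ p : P A V D, DerivAC p p
  | symm : ∀ {p q : P A V D}, DerivAC p q → DerivAC q p
  | trans : ∀ {p q r : P A V D}, DerivAC p q → DerivAC q r → DerivAC p r
  | altC : ∀ {p q p' q' : P A V D},
      DerivAC p q → DerivAC p' q' → DerivAC (.alt p p') (.alt q q')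
  | seqC : ∀ {p q p' q' : P A V D},
      DerivAC p q → DerivAC p' q' → DerivAC (.seq p p') (.seq q q')
  | iterC : ∀ {p q p' q' : P A V D},
      DerivAC p q → DerivAC p' q' → DerivAC (.iter p p') (.iter q q')
  | parC : ∀ {p q p' q' : P A V D},
      DerivAC p q → DerivAC p' q' → DerivAC (.par p p') (.par q q')
  | lmergeC : ∀ {p q p' q' : P A V D},
      DerivAC p q → DerivAC p' q' → DerivAC (.lmerge p p') (.lmerge q q')
  | cmergeC : ∀ {p q p' q' : P A V D},
      DerivAC p q → DerivAC p' q' → DerivAC (.cmerge p p') (.cmerge q q')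
  | encapC : ∀ {p q : P A V D} (H : Set A),
      DerivAC p q → DerivAC (.encap H p) (.encap H q)
  | gcC : ∀ {p q : P A V D} (φ : Cond V D),
      DerivAC p q → DerivAC (.gc φ p) (.gc φ q)
  | evalC : ∀ {p q : P A V D} (ρ : Val V D),
      DerivAC p q → DerivAC (.eval ρ p) (.eval ρ q)

/-- `t` is a summand of `t′` (`t ⊑ t′`) -/
def Summand (t t' : P A V D) : Prop :=
  (∃ t'' : P A V D, DerivAC (.alt t t'') t') ∨ DerivAC t t'

/-- head normal forms of deACPei -/
inductive HNF : P A V D → Prop where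
  | delta : HNF .delta
  | geps : ∀ φ : Cond V D, HNF (.gc φ .eps)
  | gact : ∀ (φ : Cond V D) (α : Atom A V D) (p : P A V D),
      HNF (.gc φ (.seq (.atom α) p))
  | alt : ∀ {p q : P A V D}, HNF p → HNF q → HNF (.alt p q)

/-- the assumptions of deACPei on the communication function: commutativity
and associativity (on `Act ∪ {δ}`) -/
def GammaOK (γ : A → A → Option A) : Prop :=
  (∀ a b, γ a b = γ b a) ∧
  (∀ a b c, (γ a b).bind (fun d => γ d c) = (γ b c).bind (fun d => γ a d))

/-- the terms of `RGProcTerm`: closed process terms in which the evaluation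
operators and the auxiliary operators left merge and communication merge do
not occur -/
def RGTerm : P A V D → Prop
  | .atom _ => True
  | .delta => True
  | .eps => True
  | .alt p q => RGTerm p ∧ RGTerm q
  | .seq p q => RGTerm p ∧ RGTerm q
  | .iter p q => RGTerm p ∧ RGTerm q
  | .par p q => RGTerm p ∧ RGTerm q
  | .lmerge _ _ => False
  | .cmerge _ _ => False
  | .encap _ p => RGTerm p
  | .gc _ p => RGTerm p
  | .eval _ _ => False

/-- the step relation `(p, ρ) —α→ (p′, ρ′)` -/
def RStep (γ : A → A → Option A) (p : P A V D) (ρ : Val V D) (α : Atom A V D)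
    (p' : P A V D) (ρ' : Val V D) : Prop :=
  ∀ ρ'' : Val V D, Step γ (.eval ρ p) ρ'' α (.eval ρ' p')

/-- labels of steps: atomic process terms or the environment label `e` -/
inductive Lab (A V D : Type) : Type where
  | act : Atom A V D → Lab A V D
  | env : Lab A V D

/-- the labelled step relation, including environment steps -/
def StepL (γ : A → A → Option A) (p : P A V D) (ρ : Val V D) (l : Lab A V D)
    (p' : P A V D) (ρ' : Val V D) : Prop :=
  match l with
  | .act α => RStep γ p ρ α p' ρ'
  | .env => p' = p

/-- finite computations: sequences of steps in the step relation -/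
structure Comp (γ : A → A → Option A) : Type where
  n : ℕ
  proc : ℕ → P A V D
  val : ℕ → Val V D
  lab : ℕ → Lab A V D
  step : ∀ i < n, StepL γ (proc i) (val i) (lab i) (proc (i + 1)) (val (i + 1))

/-- `σ` is a computation of `p` -/
def Comp.isOf {γ : A → A → Option A} (σ : Comp (A := A) (V := V) (D := D) γ)
    (p : P A V D) : Prop :=
  σ.proc 0 = p

/-- `σ` satisfies the assumptions `(φ, R)` -/
def asat {γ : A → A → Option A} (σ : Comp (A := A) (V := V) (D := D) γ)
    (φ : Cond V D) (R : Cond2 V D) : Prop :=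
  φ (σ.val 0) ∧
  ∀ i < σ.n, σ.lab i = .env → R (σ.val (i + 1)) (σ.val i)

/-- `σ` satisfies the commitments `(ψ, G)` -/
def csat {γ : A → A → Option A} (σ : Comp (A := A) (V := V) (D := D) γ)
    (ψ : Cond V D) (G : Cond2 V D) : Prop :=
  (σ.proc σ.n = .eps → ψ (σ.val σ.n)) ∧
  ∀ i < σ.n, σ.lab i ≠ .env → G (σ.val (i + 1)) (σ.val i)

/-- truth in the sense of partial correctness of an asserted process with
closed pre-, post-, rely- and guarantee-conditions -/
def PartialTrueC (γ : A → A → Option A) (R G : Cond2 V D) (φ : Cond V D)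
    (p : P A V D) (ψ : Cond V D) : Prop :=
  ∀ σ : Comp (A := A) (V := V) (D := D) γ, σ.isOf p → asat σ φ R → csat σ ψ G

/-- truth in the sense of partial correctness of an asserted process
`⟨R, G⟩ : {φ} p {ψ}`; the conditions may contain rigid (data) variables, whose
valuations are modelled by the parameter `z : Z`, and truth requires truth of
all closed substitution instances, i.e. quantification over all `z` -/
def PartialTrue (γ : A → A → Option A) {Z : Type*} (R G : Z → Cond2 V D)
    (φ : Z → Cond V D) (p : P A V D) (ψ : Z → Cond V D) : Prop :=
  ∀ z : Z, PartialTrueC γ (R z) (G z) (φ z) p (ψ z)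

/-- truth in the sense of partial correctness of a Hoare asserted process
`{φ} p {ψ}` (computations without environment steps) -/
def HoareTrue (γ : A → A → Option A) {Z : Type*} (φ : Z → Cond V D)
    (p : P A V D) (ψ : Z → Cond V D) : Prop :=
  ∀ z : Z, ∀ σ : Comp (A := A) (V := V) (D := D) γ, σ.isOf p →
    (∀ i < σ.n, σ.lab i ≠ Lab.env) →
    φ z (σ.val 0) → σ.proc σ.n = .eps → ψ z (σ.val σ.n)

/-- the flexible variable `v` occurs in the data term `e` -/
def ExprDep (e : Expr V D) (v : V) : Prop := ∃ ρ d, e (upd ρ v d) ≠ e ρ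

/-- the flexible variable `v` occurs in the condition `φ` -/
def CondDep (φ : Cond V D) (v : V) : Prop := ∃ ρ d, ¬ (φ (upd ρ v d) ↔ φ ρ)

/-- the flexible variable constant `v` or `prev v` occurs in the two-state
condition `R` -/
def Cond2Dep (R : Cond2 V D) (v : V) : Prop :=
  ∃ ρc ρp d, ¬ (R (upd ρc v d) ρp ↔ R ρc ρp) ∨ ¬ (R ρc (upd ρp v d) ↔ R ρc ρp)

/-- the set of flexible variables occurring in `φ` -/
def ExprDeps (e : Expr V D) : Set V := {v | ExprDep e v}

def CondDeps (φ : Cond V D) : Set V := {v | CondDep φ v}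

/-- the set `FVar` of flexible variables occurring in a family of one-state
conditions -/
def FVarC {Z : Type*} (φ : Z → Cond V D) : Set V := {v | ∃ z, CondDep (φ z) v}

/-- the set `FVar` of flexible variables occurring in a family of two-state
conditions -/
def FVar2 {Z : Type*} (R : Z → Cond2 V D) : Set V := {v | ∃ z, Cond2Dep (R z) v}

/-- `𝔇 ⊨ prev φ ∧ R ⟹ φ`: satisfaction of `φ` is preserved by steps
satisfying `R` -/
def Preserves {Z : Type*} (R : Z → Cond2 V D) (φ : Z → Cond V D) : Prop :=
  ∀ z ρc ρp, φ z ρp → R z ρc ρp → φ z ρc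

/-- the flexible variables from `A'` occur in the atomic process term only as
allowed for auxiliary variables -/
def AtomOK (A' : Set V) : Atom A V D → Prop
  | .basic _ => True
  | .param _ e es =>
      ExprDeps e ∩ A' = ∅ ∧ ∀ f ∈ es, ExprDeps f ∩ A' = ∅
  | .assign v e => v ∈ A' ∨ (v ∉ A' ∧ ExprDeps e ∩ A' = ∅)

/-- the flexible variables from `A'` occur in `p` only in subterms of the form
`v := e` with `v ∈ A'` -/
def NoAuxViolation (A' : Set V) : P A V D → Prop
  | .atom α => AtomOK A' α
  | .delta => True
  | .eps => True
  | .alt p q => NoAuxViolation A' p ∧ NoAuxViolation A' q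
  | .seq p q => NoAuxViolation A' p ∧ NoAuxViolation A' q
  | .iter p q => NoAuxViolation A' p ∧ NoAuxViolation A' q
  | .par p q => NoAuxViolation A' p ∧ NoAuxViolation A' q
  | .lmerge p q => NoAuxViolation A' p ∧ NoAuxViolation A' q
  | .cmerge p q => NoAuxViolation A' p ∧ NoAuxViolation A' q
  | .encap _ p => NoAuxViolation A' p
  | .gc φ p => CondDeps φ ∩ A' = ∅ ∧ NoAuxViolation A' p
  | .eval _ p => NoAuxViolation A' p

/-- the flexible variable `v` occurs in the process term `p` -/
def OccursIn (v : V) : P A V D → Prop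
  | .atom (.basic _) => False
  | .atom (.param _ e es) => ExprDep e v ∨ ∃ f ∈ es, ExprDep f v
  | .atom (.assign w e) => w = v ∨ ExprDep e v
  | .delta => False
  | .eps => False
  | .alt p q => OccursIn v p ∨ OccursIn v q
  | .seq p q => OccursIn v p ∨ OccursIn v q
  | .iter p q => OccursIn v p ∨ OccursIn v q
  | .par p q => OccursIn v p ∨ OccursIn v q
  | .lmerge p q => OccursIn v p ∨ OccursIn v q
  | .cmerge p q => OccursIn v p ∨ OccursIn v q
  | .encap _ p => OccursIn v p
  | .gc φ p => CondDep φ v ∨ OccursIn v p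
  | .eval _ p => OccursIn v p

/-- `A'` is a set of auxiliary variables of `p` (`A' ∈ AVars(p)`) -/
def AuxSet (A' : Set V) (p : P A V D) : Prop :=
  (∀ v ∈ A', OccursIn v p) ∧ NoAuxViolation A' p

/-- `p_{A'}`: `p` with all occurrences of subterms of the form `v := e` with
`v ∈ A'` replaced by `ε` -/
noncomputable def eraseAux (A' : Set V) : P A V D → P A V D
  | .atom (.assign v e) => if v ∈ A' then .eps else .atom (.assign v e)
  | .atom α => .atom α
  | .delta => .delta
  | .eps => .eps
  | .alt p q => .alt (eraseAux A' p) (eraseAux A' q)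
  | .seq p q => .seq (eraseAux A' p) (eraseAux A' q)
  | .iter p q => .iter (eraseAux A' p) (eraseAux A' q)
  | .par p q => .par (eraseAux A' p) (eraseAux A' q)
  | .lmerge p q => .lmerge (eraseAux A' p) (eraseAux A' q)
  | .cmerge p q => .cmerge (eraseAux A' p) (eraseAux A' q)
  | .encap H p => .encap H (eraseAux A' p)
  | .gc φ p => .gc φ (eraseAux A' p)
  | .eval ρ p => .eval ρ (eraseAux A' p)

/-- the axioms and rules of the rely/guarantee logic RG; the judgment
`RG γ Z R G φ p ψ` formalizes derivability of the asserted process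
`⟨R, G⟩ : {φ} p {ψ}`, where the conditions may contain rigid (data) variables
valued in `Z` -/
inductive RG (γ : A → A → Option A) (Z : Type) :
    (Z → Cond2 V D) → (Z → Cond2 V D) → (Z → Cond V D) → P A V D →
      (Z → Cond V D) → Prop where
  | inaction : ∀ {R G : Z → Cond2 V D} {φ ψ : Z → Cond V D},
      RG γ Z R G φ .delta ψ
  | empty : ∀ {R G : Z → Cond2 V D} {φ : Z → Cond V D},
      Preserves R φ → RG γ Z R G φ .eps φ
  | nonAssign : ∀ {R G : Z → Cond2 V D} {φ : Z → Cond V D} (α : Atom A V D),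
      ¬ α.isAssign →
      Preserves R φ →
      (∀ z ρc ρp, φ z ρp → (∀ v ∈ FVarC φ ∪ FVar2 G, ρc v = ρp v) →
        G z ρc ρp) →
      RG γ Z R G φ (.atom α) φ
  | assign : ∀ {R G : Z → Cond2 V D} {φ ψ : Z → Cond V D} (v : V) (e : Expr V D),
      (∀ z ρ, φ z ρ → ψ z (upd ρ v (e ρ))) →
      Preserves R φ → Preserves R ψ →
      (∀ z ρc ρp, φ z ρp → (ρc v = e ρp ∨ ρc v = ρp v) →
        (∀ w ∈ (FVarC φ ∪ FVar2 G) \ {v}, ρc w = ρp w) → G z ρc ρp) →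
      RG γ Z R G φ (.atom (.assign v e)) ψ
  | altI : ∀ {R G : Z → Cond2 V D} {φ ψ : Z → Cond V D} {p q : P A V D},
      RG γ Z R G φ p ψ → RG γ Z R G φ q ψ → RG γ Z R G φ (.alt p q) ψ
  | seqI : ∀ {R G : Z → Cond2 V D} {φ χ ψ : Z → Cond V D} {p q : P A V D},
      RG γ Z R G φ p χ → RG γ Z R G χ q ψ → RG γ Z R G φ (.seq p q) ψ
  | iterI : ∀ {R G : Z → Cond2 V D} {φ ψ : Z → Cond V D} {p q : P A V D},
      RG γ Z R G φ p φ → RG γ Z R G φ q ψ → RG γ Z R G φ (.iter p q) ψ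
  | gcI : ∀ {R G : Z → Cond2 V D} {φ ψ : Z → Cond V D} {p : P A V D}
      (χ : Cond V D),
      Preserves R φ →
      RG γ Z R G (fun z ρ => φ z ρ ∧ χ ρ) p ψ →
      RG γ Z R G φ (.gc χ p) ψ
  | parI : ∀ {R G' G'' : Z → Cond2 V D} {φ ψ' ψ'' : Z → Cond V D}
      {p q : P A V D},
      RG γ Z (fun z ρc ρp => R z ρc ρp ∨ G'' z ρc ρp) G' φ p ψ' →
      RG γ Z (fun z ρc ρp => R z ρc ρp ∨ G' z ρc ρp) G'' φ q ψ'' →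
      RG γ Z R (fun z ρc ρp => G' z ρc ρp ∨ G'' z ρc ρp) φ (.par p q)
        (fun z ρ => ψ' z ρ ∧ ψ'' z ρ)
  | encapI : ∀ {R G : Z → Cond2 V D} {φ ψ : Z → Cond V D} {p : P A V D}
      (H : Set A),
      RG γ Z R G φ p ψ → RG γ Z R G φ (.encap H p) ψ
  | auxI : ∀ {R R' G : Z → Cond2 V D} {φ φ' ψ : Z → Cond V D} {p : P A V D}
      (A' : Set V),
      Preserves R φ →
      (∀ (z : Z) (ρ : Val V D), ∃ ρ' : Val V D, (∀ v ∉ A', ρ' v = ρ v) ∧ φ' z ρ') →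
      (∀ (z : Z) (ρc ρp : Val V D), ∃ ρc' : Val V D, (∀ v ∉ A', ρc' v = ρc v) ∧ R' z ρc' ρp) →
      RG γ Z (fun z ρc ρp => R z ρc ρp ∧ R' z ρc ρp) G
        (fun z ρ => φ z ρ ∧ φ' z ρ) p ψ →
      AuxSet A' p →
      (FVarC φ ∪ FVarC ψ ∪ FVar2 R ∪ FVar2 G) ∩ A' = ∅ →
      RG γ Z R G φ (eraseAux A' p) ψ
  | conseq : ∀ {R R' G G' : Z → Cond2 V D} {φ φ' ψ ψ' : Z → Cond V D}
      {p : P A V D},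
      (∀ z ρ, φ z ρ → φ' z ρ) →
      (∀ z ρc ρp, R z ρc ρp → R' z ρc ρp) →
      (∀ z ρc ρp, G' z ρc ρp → G z ρc ρp) →
      (∀ z ρ, ψ' z ρ → ψ z ρ) →
      RG γ Z R' G' φ' p ψ' →
      RG γ Z R G φ p ψ

/-- computations `σ` of `p′ ∥ p″`, `σ′` of `p′` and `σ″` of `p″` conjoin
(`σ ∝ σ′ ∥ σ″`) -/
def Conjoin (γ : A → A → Option A)
    (σ σ' σ'' : Comp (A := A) (V := V) (D := D) γ) : Prop :=
  σ.n = σ'.n ∧ σ.n = σ''.n ∧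
  (∀ i ≤ σ.n, σ.proc i = .par (σ'.proc i) (σ''.proc i)) ∧
  (∀ i ≤ σ.n, σ.val i = σ'.val i ∧ σ.val i = σ''.val i) ∧
  ∀ i < σ.n,
    (σ'.lab i ≠ .env ∧ σ''.lab i = .env ∧ σ.lab i = σ'.lab i) ∨
    (σ'.lab i = .env ∧ σ''.lab i ≠ .env ∧ σ.lab i = σ''.lab i) ∨
    (σ'.lab i = .env ∧ σ''.lab i = .env ∧ σ.lab i = .env) ∨
    (∃ α' α'' β : Atom A V D, σ'.lab i = .act α' ∧ σ''.lab i = .act α'' ∧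
      σ.lab i = .act β ∧
      Deriv γ (.cmerge (.atom α') (.atom α'')) (.atom β))

/-- the atomic process term `α` occurs in the process term `p` -/
def OccursAtom (α : Atom A V D) : P A V D → Prop
  | .atom β => β = α
  | .delta => False
  | .eps => False
  | .alt p q => OccursAtom α p ∨ OccursAtom α q
  | .seq p q => OccursAtom α p ∨ OccursAtom α q
  | .iter p q => OccursAtom α p ∨ OccursAtom α q
  | .par p q => OccursAtom α p ∨ OccursAtom α q
  | .lmerge p q => OccursAtom α p ∨ OccursAtom α q
  | .cmerge p q => OccursAtom α p ∨ OccursAtom α q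
  | .encap _ p => OccursAtom α p
  | .gc _ p => OccursAtom α p
  | .eval _ p => OccursAtom α p

/-- possibly infinite computations -/
structure CompW (γ : A → A → Option A) : Type where
  len : ℕ∞
  proc : ℕ → P A V D
  val : ℕ → Val V D
  lab : ℕ → Lab A V D
  step : ∀ i : ℕ, (i : ℕ∞) < len →
    StepL γ (proc i) (val i) (lab i) (proc (i + 1)) (val (i + 1))

def CompW.isOf {γ : A → A → Option A} (σ : CompW (A := A) (V := V) (D := D) γ)
    (p : P A V D) : Prop :=
  σ.proc 0 = p

/-- `σ` satisfies the assumptions `(φ, R)` -/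
def asatW {γ : A → A → Option A} (σ : CompW (A := A) (V := V) (D := D) γ)
    (φ : Cond V D) (R : Cond2 V D) : Prop :=
  φ (σ.val 0) ∧
  ∀ i : ℕ, (i : ℕ∞) < σ.len → σ.lab i = .env → R (σ.val (i + 1)) (σ.val i)

/-- `σ` satisfies the commitments `(ψ, G)` -/
def csatW {γ : A → A → Option A} (σ : CompW (A := A) (V := V) (D := D) γ)
    (ψ : Cond V D) (G : Cond2 V D) : Prop :=
  (∀ n : ℕ, σ.len = (n : ℕ∞) → σ.proc n = .eps → ψ (σ.val n)) ∧
  ∀ i : ℕ, (i : ℕ∞) < σ.len → σ.lab i ≠ .env → G (σ.val (i + 1)) (σ.val i)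

/-- `σ` is convergent: it contains only finitely many non-environment steps -/
def Conv {γ : A → A → Option A}
    (σ : CompW (A := A) (V := V) (D := D) γ) : Prop :=
  {i : ℕ | (i : ℕ∞) < σ.len ∧ σ.lab i ≠ .env}.Finite

/-- a finite `σ` satisfies the enabledness-condition `θ` -/
def esat {γ : A → A → Option A} (σ : CompW (A := A) (V := V) (D := D) γ)
    (θ : Cond V D) : Prop :=
  ∀ n : ℕ, σ.len = (n : ℕ∞) → θ (σ.val n) →
    σ.proc n = .eps ∨
    ∃ (α : Atom A V D) (p' : P A V D) (ρ' : Val V D),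
      RStep γ (σ.proc n) (σ.val n) α p' ρ'

/-- the carrier of sort `Ord` of the data algebra: all ordinals `α` such that
`ω` is not smaller than `α` -/
abbrev OrdD : Type 1 := {o : Ordinal // o ≤ Ordinal.omega0}

/-- the axioms and rules of the rely/guarantee logic RG adapted to deadlock
freedom; the judgment `RGE γ Z R θ G φ p ψ` formalizes derivability of the
asserted process with enabledness-condition `⟨R, θ, G⟩ : {φ} p {ψ}` -/
inductive RGE (γ : A → A → Option A) : ∀ Z : Type 1,
    (Z → Cond2 V D) → (Z → Cond V D) → (Z → Cond2 V D) → (Z → Cond V D) →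
      P A V D → (Z → Cond V D) → Prop where
  | inaction : ∀ {Z : Type 1} {R G : Z → Cond2 V D} {φ ψ : Z → Cond V D},
      RGE γ Z R (fun _ _ => False) G φ .delta ψ
  | empty : ∀ {Z : Type 1} {R G : Z → Cond2 V D} {θ φ : Z → Cond V D},
      Preserves R φ → RGE γ Z R θ G φ .eps φ
  | nonAssign : ∀ {Z : Type 1} {R G : Z → Cond2 V D} {θ φ : Z → Cond V D}
      (α : Atom A V D),
      ¬ α.isAssign →
      Preserves R φ →
      (∀ z ρc ρp, φ z ρp → (∀ v ∈ FVarC φ ∪ FVar2 G, ρc v = ρp v) →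
        G z ρc ρp) →
      RGE γ Z R θ G φ (.atom α) φ
  | assign : ∀ {Z : Type 1} {R G : Z → Cond2 V D} {θ φ ψ : Z → Cond V D}
      (v : V) (e : Expr V D),
      (∀ z ρ, φ z ρ → ψ z (upd ρ v (e ρ))) →
      Preserves R φ → Preserves R ψ →
      (∀ z ρc ρp, φ z ρp → (ρc v = e ρp ∨ ρc v = ρp v) →
        (∀ w ∈ (FVarC φ ∪ FVar2 G) \ {v}, ρc w = ρp w) → G z ρc ρp) →
      RGE γ Z R θ G φ (.atom (.assign v e)) ψ
  | altI : ∀ {Z : Type 1} {R G : Z → Cond2 V D} {θ' θ'' φ ψ : Z → Cond V D}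
      {p q : P A V D},
      RGE γ Z R θ' G φ p ψ → RGE γ Z R θ'' G φ q ψ →
      RGE γ Z R (fun z ρ => θ' z ρ ∨ θ'' z ρ) G φ (.alt p q) ψ
  | seqI : ∀ {Z : Type 1} {R G : Z → Cond2 V D} {θ φ χ ψ : Z → Cond V D}
      {p q : P A V D},
      RGE γ Z R θ G φ p χ → RGE γ Z R θ G χ q ψ → RGE γ Z R θ G φ (.seq p q) ψ
  | iterI : ∀ {Z : Type 1} {R G : Z → Cond2 V D} {θ' θ'' ψ : Z → Cond V D}
      {p q : P A V D} (φ : Z → OrdD → Cond V D),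
      (∀ z (a : OrdD) ρc ρp, φ z a ρp → R z ρc ρp →
        ∃ a' : OrdD, a' ≤ a ∧ φ z a' ρc) →
      RGE γ (Z × OrdD) (fun w => R w.1) (fun w => θ' w.1) (fun w => G w.1)
        (fun w ρ => φ w.1 w.2 ρ ∧ 0 < w.2.val) p
        (fun w ρ => ∃ a' : OrdD, a' < w.2 ∧ φ w.1 a' ρ) →
      RGE γ Z R θ'' G (fun z ρ => φ z ⟨0, zero_le⟩ ρ) q ψ →
      RGE γ Z R (fun z ρ => θ' z ρ ∨ θ'' z ρ) G
        (fun z ρ => ∃ a : OrdD, φ z a ρ) (.iter p q) ψ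
  | gcI : ∀ {Z : Type 1} {R G : Z → Cond2 V D} {φ ψ : Z → Cond V D}
      {p : P A V D} (χ : Cond V D),
      Preserves R φ →
      RGE γ Z R (fun _ _ => True) G (fun z ρ => φ z ρ ∧ χ ρ) p ψ →
      RGE γ Z R (fun z ρ => φ z ρ → χ ρ) G φ (.gc χ p) ψ
  | parI : ∀ {Z : Type 1} {R G' G'' : Z → Cond2 V D}
      {θ θ' θ'' φ ψ' ψ'' : Z → Cond V D} {p q : P A V D},
      (∀ z ρ, ψ'' z ρ → θ' z ρ) →
      (∀ z ρ, ψ' z ρ → θ'' z ρ) →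
      (∀ z ρ, θ' z ρ ∨ θ'' z ρ) →
      RGE γ Z (fun z ρc ρp => R z ρc ρp ∨ G'' z ρc ρp)
        (fun z ρ => θ z ρ ∧ θ' z ρ) G' φ p ψ' →
      RGE γ Z (fun z ρc ρp => R z ρc ρp ∨ G' z ρc ρp)
        (fun z ρ => θ z ρ ∧ θ'' z ρ) G'' φ q ψ'' →
      RGE γ Z R θ (fun z ρc ρp => G' z ρc ρp ∨ G'' z ρc ρp) φ (.par p q)
        (fun z ρ => ψ' z ρ ∧ ψ'' z ρ)
  | encapI : ∀ {Z : Type 1} {R G : Z → Cond2 V D} {θ φ ψ : Z → Cond V D}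
      {p : P A V D} (H : Set A),
      RGE γ Z R θ G φ p ψ →
      (∀ a ∈ H, ¬ OccursAtom (.basic a) p) →
      RGE γ Z R θ G φ (.encap H p) ψ
  | auxI : ∀ {Z : Type 1} {R R' G : Z → Cond2 V D}
      {θ θ' φ φ' ψ : Z → Cond V D} {p : P A V D} (A' : Set V),
      Preserves R φ →
      (∀ (z : Z) (ρ : Val V D), ∃ ρ' : Val V D, (∀ v ∉ A', ρ' v = ρ v) ∧ φ' z ρ') →
      (∀ (z : Z) (ρc ρp : Val V D), ∃ ρc' : Val V D, (∀ v ∉ A', ρc' v = ρc v) ∧ R' z ρc' ρp) →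
      (∀ (z : Z) (ρ : Val V D), ∃ ρ' : Val V D, (∀ v ∉ A', ρ' v = ρ v) ∧ θ' z ρ') →
      RGE γ Z (fun z ρc ρp => R z ρc ρp ∧ R' z ρc ρp)
        (fun z ρ => θ z ρ ∧ θ' z ρ) G (fun z ρ => φ z ρ ∧ φ' z ρ) p ψ →
      AuxSet A' p →
      (FVarC φ ∪ FVarC ψ ∪ FVarC θ ∪ FVar2 R ∪ FVar2 G) ∩ A' = ∅ →
      RGE γ Z R θ G φ (eraseAux A' p) ψ
  | conseq : ∀ {Z : Type 1} {R R' G G' : Z → Cond2 V D}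
      {θ θ' φ φ' ψ ψ' : Z → Cond V D} {p : P A V D},
      (∀ z ρ, φ z ρ → φ' z ρ) →
      (∀ z ρc ρp, R z ρc ρp → R' z ρc ρp) →
      (∀ z ρ, θ z ρ → θ' z ρ) →
      (∀ z ρc ρp, G' z ρc ρp → G z ρc ρp) →
      (∀ z ρ, ψ' z ρ → ψ z ρ) →
      RGE γ Z R' θ' G' φ' p ψ' →
      RGE γ Z R θ G φ p ψ

/-- truth in the sense of weak total correctness of an asserted process with
enabledness-condition `⟨R, θ, G⟩ : {φ} p {ψ}` -/
def WTTrueE (γ : A → A → Option A) {Z : Type*} (R : Z → Cond2 V D)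
    (θ : Z → Cond V D) (G : Z → Cond2 V D) (φ : Z → Cond V D) (p : P A V D)
    (ψ : Z → Cond V D) : Prop :=
  ∀ z : Z, ∀ σ : CompW (A := A) (V := V) (D := D) γ, σ.isOf p →
    asatW σ (φ z) (R z) →
    Conv σ ∧ esat σ (θ z) ∧ csatW σ (ψ z) (G z)

end DeACPei
/-!
Induction on `p`: each operator is pushed through the head normal forms of its arguments by
its axioms for `+` (A4, CM4, CM8, CM9, D3, V4, GC4) and for guards (GC5, GC8–GC11, V5).
The merges, encapsulation and evaluation have no axiom for a summand `δ`, so there `δ` is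
first rewritten as `False :→ ε` (GC2). For `·` and `⋆` an HNF is split as `g + φ :→ ε` with
`g` guarded, since `g · t` has an HNF for every `t`: then `(g + φ :→ ε) · q = g · q + φ :→ q`,
and, as BKS5 drops `φ :→ ε` under `⋆`, `p ⋆ q = g · (g ⋆ q) + q` by BKS1.
-/

namespace DeACPei

variable {A V D : Type} {γ : A → A → Option A}

instance : Trans (Deriv (A := A) (V := V) (D := D) γ) (Deriv γ) (Deriv γ) :=
  ⟨Deriv.trans⟩

namespace Deriv

theorem delta_alt (x : P A V D) : Deriv γ (.alt .delta x) x :=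
  (Deriv.ax (.a1 _ _)).trans (.ax (.a6 x))

theorem alt_gc_false_eps (x : P A V D) :
    Deriv γ (.alt x (.gc (fun _ => False) .eps)) x :=
  (Deriv.altC (.refl x) (.ax (.gc2 _))).trans (.ax (.a6 x))

theorem alt_alt_alt_comm (a b c d : P A V D) :
    Deriv γ (.alt (.alt a b) (.alt c d)) (.alt (.alt a c) (.alt b d)) :=
  calc Deriv γ (.alt (.alt a b) (.alt c d)) (.alt a (.alt b (.alt c d))) := .ax (.a2 _ _ _)
    Deriv γ _ (.alt a (.alt (.alt b c) d)) := .altC (.refl a) (.symm (.ax (.a2 _ _ _)))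
    Deriv γ _ (.alt a (.alt (.alt c b) d)) := .altC (.refl a) (.altC (.ax (.a1 _ _)) (.refl d))
    Deriv γ _ (.alt a (.alt c (.alt b d))) := .altC (.refl a) (.ax (.a2 _ _ _))
    Deriv γ _ (.alt (.alt a c) (.alt b d)) := .symm (.ax (.a2 _ _ _))

theorem gc_eps_alt_eps (φ : Cond V D) :
    Deriv γ (.alt (.gc φ .eps) .eps) (P.eps : P A V D) := by
  have htrue : (fun ρ => φ ρ ∨ True) = fun _ : Val V D => True := by
    funext ρ
    simp
  calc Deriv γ (.alt (.gc φ .eps) .eps) (.alt (.gc φ .eps) (.gc (fun _ => True) .eps)) :=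
        .altC (.refl _) (.symm (.ax (.gc1 _)))
    Deriv γ _ (.gc (fun ρ => φ ρ ∨ True) .eps) := .symm (.ax (.gc7 _ _ _))
    Deriv γ _ .eps := htrue ▸ .ax (.gc1 _)

theorem iter_alt_gc_eps (x : P A V D) (φ : Cond V D) (y : P A V D) :
    Deriv γ (.iter (.alt x (.gc φ .eps)) y) (.iter x y) :=
  calc Deriv γ (.iter (.alt x (.gc φ .eps)) y) (.iter (.alt (.alt x (.gc φ .eps)) .eps) y) :=
        .symm (.ax (.bks5 _ y))
    Deriv γ _ (.iter (.alt x .eps) y) :=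
        .iterC ((Deriv.ax (.a2 _ _ _)).trans (.altC (.refl x) (gc_eps_alt_eps φ))) (.refl y)
    Deriv γ _ (.iter x y) := .ax (.bks5 x y)

theorem encap_atom (H : Set A) (α : Atom A V D) :
    Deriv γ (.encap H (.atom α)) .delta ∨ Deriv γ (.encap H (.atom α)) (.atom α) := by
  cases α with
  | basic a =>
    by_cases ha : a ∈ H
    · exact .inl (.ax (.d2 ha))
    · exact .inr (.ax (.d1 ha))
  | param a e es =>
    by_cases ha : a ∈ H
    · exact .inl (.ax (.d2d ha))
    · exact .inr (.ax (.d1da ha))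
  | assign v e => exact .inr (.ax (.d1db H v e))

theorem exists_eval_atom_seq (ρ : Val V D) (α : Atom A V D) (p : P A V D) :
    ∃ (β : Atom A V D) (q : P A V D),
      Deriv γ (.eval ρ (.seq (.atom α) p)) (.seq (.atom β) q) := by
  cases α with
  | basic a => exact ⟨_, _, .ax (.v1 ρ (some a) p)⟩
  | param a e es => exact ⟨_, _, .ax (.v2 ρ a e es p)⟩
  | assign v e => exact ⟨_, _, .ax (.v3 ρ v e p)⟩

end Deriv

def HasHNF (γ : A → A → Option A) (p : P A V D) : Prop :=
  ∃ q : P A V D, HNF q ∧ Deriv γ p q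

theorem HNF.hasHNF {p : P A V D} (hp : HNF p) : HasHNF γ p :=
  ⟨p, hp, .refl p⟩

namespace HasHNF

theorem of_deriv {p q : P A V D} (hpq : Deriv γ p q) (hq : HasHNF γ q) : HasHNF γ p :=
  let ⟨r, hr, hqr⟩ := hq
  ⟨r, hr, hpq.trans hqr⟩

theorem delta : HasHNF γ (P.delta : P A V D) :=
  HNF.delta.hasHNF

theorem alt {p q : P A V D} (hp : HasHNF γ p) (hq : HasHNF γ q) : HasHNF γ (.alt p q) :=
  let ⟨p', hp', dp⟩ := hp
  let ⟨q', hq', dq⟩ := hq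
  ⟨.alt p' q', .alt hp' hq', .altC dp dq⟩

theorem atom_seq (α : Atom A V D) (p : P A V D) : HasHNF γ (.seq (.atom α) p) :=
  .of_deriv (.symm (.ax (.gc1 _))) (HNF.gact _ α p).hasHNF

end HasHNF

theorem HNF.hasHNF_gc (φ : Cond V D) {h : P A V D} (hh : HNF h) :
    HasHNF γ (.gc φ h) := by
  induction hh with
  | delta => exact .of_deriv (.ax (.gc3 φ)) .delta
  | geps ψ => exact .of_deriv (.ax (.gc6 φ ψ _)) (HNF.geps _).hasHNF
  | gact ψ α q => exact .of_deriv (.ax (.gc6 φ ψ _)) (HNF.gact _ α q).hasHNF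
  | alt _ _ ih₁ ih₂ => exact .of_deriv (.ax (.gc4 φ _ _)) (ih₁.alt ih₂)

theorem HasHNF.gc (φ : Cond V D) {p : P A V D} (hp : HasHNF γ p) : HasHNF γ (.gc φ p) :=
  let ⟨_, hh, dh⟩ := hp
  .of_deriv (.gcC φ dh) (hh.hasHNF_gc φ)

inductive GuardedHNF : P A V D → Prop where
  | delta : GuardedHNF .delta
  | gact : ∀ (φ : Cond V D) (α : Atom A V D) (p : P A V D),
      GuardedHNF (.gc φ (.seq (.atom α) p))
  | alt : ∀ {p q : P A V D}, GuardedHNF p → GuardedHNF q → GuardedHNF (.alt p q)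

theorem GuardedHNF.hasHNF_seq {g : P A V D} (hg : GuardedHNF g) (t : P A V D) :
    HasHNF γ (.seq g t) := by
  induction hg with
  | delta => exact .of_deriv (.ax (.a7 t)) .delta
  | gact φ α p =>
    exact .of_deriv ((Deriv.symm (.ax (.gc5 φ _ t))).trans (.gcC φ (.ax (.a5 _ _ _))))
      (HNF.gact _ _ _).hasHNF
  | alt _ _ ih₁ ih₂ => exact .of_deriv (.ax (.a4 _ _ t)) (ih₁.alt ih₂)

theorem HNF.exists_guardedHNF_alt_gc_eps {h : P A V D} (hh : HNF h) :
    ∃ (g : P A V D) (φ : Cond V D), GuardedHNF g ∧ Deriv γ h (.alt g (.gc φ .eps)) := by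
  induction hh with
  | delta =>
    exact ⟨.delta, fun _ => False, .delta, .symm (Deriv.alt_gc_false_eps _)⟩
  | geps φ => exact ⟨.delta, φ, .delta, .symm (Deriv.delta_alt _)⟩
  | gact φ α p =>
    exact ⟨_, fun _ => False, .gact φ α p, .symm (Deriv.alt_gc_false_eps _)⟩
  | alt _ _ ih₁ ih₂ =>
    obtain ⟨g₁, φ₁, hg₁, d₁⟩ := ih₁
    obtain ⟨g₂, φ₂, hg₂, d₂⟩ := ih₂
    exact ⟨.alt g₁ g₂, fun ρ => φ₁ ρ ∨ φ₂ ρ, .alt hg₁ hg₂,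
      (Deriv.altC d₁ d₂).trans ((Deriv.alt_alt_alt_comm _ _ _ _).trans
        (.altC (.refl _) (.symm (.ax (.gc7 _ _ _)))))⟩

theorem HasHNF.exists_guardedHNF_alt_gc_eps {p : P A V D} (hp : HasHNF γ p) :
    ∃ (g : P A V D) (φ : Cond V D), GuardedHNF g ∧ Deriv γ p (.alt g (.gc φ .eps)) :=
  let ⟨_, hh, dh⟩ := hp
  let ⟨g, φ, hg, dg⟩ := hh.exists_guardedHNF_alt_gc_eps (γ := γ)
  ⟨g, φ, hg, dh.trans dg⟩

theorem HasHNF.seq {p q : P A V D} (hp : HasHNF γ p) (hq : HasHNF γ q) :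
    HasHNF γ (.seq p q) := by
  obtain ⟨g, φ, hg, dp⟩ := hp.exists_guardedHNF_alt_gc_eps
  refine .of_deriv ?_ ((hg.hasHNF_seq q).alt (hq.gc φ))
  calc Deriv γ (.seq p q) (.seq (.alt g (.gc φ .eps)) q) := .seqC dp (.refl q)
    Deriv γ _ (.alt (.seq g q) (.seq (.gc φ .eps) q)) := .ax (.a4 _ _ q)
    Deriv γ _ (.alt (.seq g q) (.gc φ (.seq .eps q))) :=
        .altC (.refl _) (.symm (.ax (.gc5 φ _ q)))
    Deriv γ _ (.alt (.seq g q) (.gc φ q)) := .altC (.refl _) (.gcC φ (.ax (.a9 q)))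

theorem HasHNF.iter {p q : P A V D} (hp : HasHNF γ p) (hq : HasHNF γ q) :
    HasHNF γ (.iter p q) := by
  obtain ⟨g, φ, hg, dp⟩ := hp.exists_guardedHNF_alt_gc_eps
  refine .of_deriv ?_ ((hg.hasHNF_seq (.iter g q)).alt hq)
  calc Deriv γ (.iter p q) (.iter (.alt g (.gc φ .eps)) q) := .iterC dp (.refl q)
    Deriv γ _ (.iter g q) := Deriv.iter_alt_gc_eps g φ q
    Deriv γ _ (.alt (.seq g (.iter g q)) q) := .ax (.bks1 g q)

inductive DeltaFreeHNF : P A V D → Prop where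
  | geps : ∀ φ : Cond V D, DeltaFreeHNF (.gc φ .eps)
  | gact : ∀ (φ : Cond V D) (α : Atom A V D) (p : P A V D),
      DeltaFreeHNF (.gc φ (.seq (.atom α) p))
  | alt : ∀ {p q : P A V D}, DeltaFreeHNF p → DeltaFreeHNF q → DeltaFreeHNF (.alt p q)

theorem HNF.exists_deltaFreeHNF {h : P A V D} (hh : HNF h) :
    ∃ k : P A V D, DeltaFreeHNF k ∧ Deriv γ h k := by
  induction hh with
  | delta => exact ⟨_, .geps fun _ => False, .symm (.ax (.gc2 .eps))⟩
  | geps φ => exact ⟨_, .geps φ, .refl _⟩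
  | gact φ α p => exact ⟨_, .gact φ α p, .refl _⟩
  | alt _ _ ih₁ ih₂ =>
    obtain ⟨k₁, hk₁, d₁⟩ := ih₁
    obtain ⟨k₂, hk₂, d₂⟩ := ih₂
    exact ⟨.alt k₁ k₂, .alt hk₁ hk₂, .altC d₁ d₂⟩

theorem HasHNF.exists_deltaFreeHNF {p : P A V D} (hp : HasHNF γ p) :
    ∃ k : P A V D, DeltaFreeHNF k ∧ Deriv γ p k :=
  let ⟨_, hh, dh⟩ := hp
  let ⟨k, hk, dk⟩ := hh.exists_deltaFreeHNF (γ := γ)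
  ⟨k, hk, dh.trans dk⟩

namespace DeltaFreeHNF

theorem hasHNF_lmerge {h : P A V D} (hh : DeltaFreeHNF h) (t : P A V D) :
    HasHNF γ (.lmerge h t) := by
  induction hh with
  | geps φ =>
    exact .of_deriv ((Deriv.ax (.gc8 φ .eps t)).trans
      ((Deriv.gcC φ (.ax (.cm2e t))).trans (.ax (.gc3 φ)))) .delta
  | gact φ α p =>
    exact .of_deriv ((Deriv.ax (.gc8 φ _ t)).trans (.gcC φ (.ax (.cm3 (some α) p t))))
      (HNF.gact _ _ _).hasHNF
  | alt _ _ ih₁ ih₂ => exact .of_deriv (.ax (.cm4 _ _ t)) (ih₁.alt ih₂)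

theorem hasHNF_encap (H : Set A) {h : P A V D} (hh : DeltaFreeHNF h) :
    HasHNF γ (.encap H h) := by
  induction hh with
  | geps φ =>
    exact .of_deriv ((Deriv.ax (.gc11 H φ .eps)).trans (.gcC φ (.ax (.d0 H))))
      (HNF.geps φ).hasHNF
  | gact φ α p =>
    refine .of_deriv ((Deriv.ax (.gc11 H φ _)).trans (.gcC φ (.ax (.d4 H _ p)))) (.gc φ ?_)
    rcases Deriv.encap_atom (γ := γ) H α with hδ | hα
    · exact .of_deriv ((Deriv.seqC hδ (.refl _)).trans (.ax (.a7 _))) .delta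
    · exact .of_deriv (.seqC hα (.refl _)) (.atom_seq α _)
  | alt _ _ ih₁ ih₂ => exact .of_deriv (.ax (.d3 H _ _)) (ih₁.alt ih₂)

theorem hasHNF_eval (ρ : Val V D) {h : P A V D} (hh : DeltaFreeHNF h) :
    HasHNF γ (.eval ρ h) := by
  induction hh with
  | geps φ =>
    exact .of_deriv ((Deriv.ax (.v5 ρ φ .eps)).trans (.gcC _ (.ax (.v0 ρ))))
      (HNF.geps _).hasHNF
  | gact φ α p =>
    obtain ⟨β, q, d⟩ := Deriv.exists_eval_atom_seq (γ := γ) ρ α p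
    exact .of_deriv ((Deriv.ax (.v5 ρ φ _)).trans (.gcC _ d)) ((HasHNF.atom_seq β q).gc _)
  | alt _ _ ih₁ ih₂ => exact .of_deriv (.ax (.v4 ρ _ _)) (ih₁.alt ih₂)

end DeltaFreeHNF

theorem hasHNF_cmerge_atom_seq (α β : Atom A V D) (p q : P A V D) :
    HasHNF γ (.cmerge (.seq (.atom α) p) (.seq (.atom β) q)) := by
  cases α with
  | basic a =>
    cases β with
    | basic b =>
      refine .of_deriv (.ax (.cm7 (some a) (some b) p q)) ?_
      change HasHNF γ (.seq (ofOptA (γ a b)) (.par p q))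
      cases γ a b with
      | none => exact .of_deriv (.ax (.a7 _)) .delta
      | some c => exact .atom_seq _ _
    | param b f fs => exact .of_deriv (.ax (.cm7dd (some (.basic a)) p q (by simp))) .delta
    | assign v e => exact .of_deriv (.ax (.cm7df (some (.basic a)) p q)) .delta
  | param a e es =>
    cases β with
    | basic b => exact .of_deriv (.ax (.cm7dc (some (.basic b)) p q (by simp))) .delta
    | param b f fs =>
      cases hab : γ a b with
      | none => exact .of_deriv (.ax (.cm7db p q (.inl hab))) .delta
      | some c =>
        by_cases hl : es.length = fs.length
        · exact .of_deriv (.ax (.cm7da p q hab hl)) (HNF.gact _ _ _).hasHNF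
        · exact .of_deriv (.ax (.cm7db p q (.inr hl))) .delta
    | assign w f => exact .of_deriv (.ax (.cm7df (some (.param a e es)) p q)) .delta
  | assign v e => exact .of_deriv (.ax (.cm7de (some β) p q)) .delta

namespace DeltaFreeHNF

theorem hasHNF_gc_atom_seq_cmerge (φ : Cond V D) (α : Atom A V D) (p : P A V D)
    {k : P A V D} (hk : DeltaFreeHNF k) :
    HasHNF γ (.cmerge (.gc φ (.seq (.atom α) p)) k) := by
  induction hk with
  | geps ψ =>
    exact .of_deriv ((Deriv.ax (.gc10 ψ _ .eps)).trans
      ((Deriv.gcC ψ (.ax (.cm6e _))).trans (.ax (.gc3 ψ)))) .delta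
  | gact ψ β q =>
    exact .of_deriv ((Deriv.ax (.gc9 φ _ _)).trans (.gcC φ (.ax (.gc10 ψ _ _))))
      (((hasHNF_cmerge_atom_seq α β p q).gc ψ).gc φ)
  | alt _ _ ih₁ ih₂ => exact .of_deriv (.ax (.cm9 _ _ _)) (ih₁.alt ih₂)

theorem hasHNF_cmerge {h k : P A V D} (hh : DeltaFreeHNF h) (hk : DeltaFreeHNF k) :
    HasHNF γ (.cmerge h k) := by
  induction hh with
  | geps φ =>
    exact .of_deriv ((Deriv.ax (.gc9 φ .eps k)).trans
      ((Deriv.gcC φ (.ax (.cm5e k))).trans (.ax (.gc3 φ)))) .delta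
  | gact φ α p => exact hk.hasHNF_gc_atom_seq_cmerge φ α p
  | alt _ _ ih₁ ih₂ => exact .of_deriv (.ax (.cm8 _ _ k)) (ih₁.alt ih₂)

end DeltaFreeHNF

namespace HasHNF

variable {p q : P A V D}

theorem lmerge (hp : HasHNF γ p) (q : P A V D) : HasHNF γ (.lmerge p q) :=
  let ⟨_, hk, dk⟩ := hp.exists_deltaFreeHNF
  .of_deriv (.lmergeC dk (.refl q)) (hk.hasHNF_lmerge q)

theorem cmerge (hp : HasHNF γ p) (hq : HasHNF γ q) : HasHNF γ (.cmerge p q) :=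
  let ⟨_, hk, dk⟩ := hp.exists_deltaFreeHNF
  let ⟨_, hl, dl⟩ := hq.exists_deltaFreeHNF
  .of_deriv (.cmergeC dk dl) (hk.hasHNF_cmerge hl)

theorem encap (H : Set A) (hp : HasHNF γ p) : HasHNF γ (.encap H p) :=
  let ⟨_, hk, dk⟩ := hp.exists_deltaFreeHNF
  .of_deriv (.encapC H dk) (hk.hasHNF_encap H)

theorem eval (ρ : Val V D) (hp : HasHNF γ p) : HasHNF γ (.eval ρ p) :=
  let ⟨_, hk, dk⟩ := hp.exists_deltaFreeHNF
  .of_deriv (.evalC ρ dk) (hk.hasHNF_eval ρ)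

theorem par (hp : HasHNF γ p) (hq : HasHNF γ q) : HasHNF γ (.par p q) :=
  .of_deriv (.ax (.cm1e p q))
    ((((hp.lmerge q).alt (hq.lmerge p)).alt (hp.cmerge hq)).alt
      ((hp.encap _).seq (hq.encap _)))

end HasHNF

theorem exists_head_normal_form_general {A V D : Type} (γ : A → A → Option A) :
    ∀ p : P A V D, ∃ q : P A V D, HNF q ∧ Deriv γ p q := by
  intro p
  show HasHNF γ p
  induction p with
  | atom α => exact .of_deriv (.symm (.ax (.a8 _))) (.atom_seq α .eps)
  | delta => exact .delta
  | eps => exact .of_deriv (.symm (.ax (.gc1 _))) (HNF.geps _).hasHNF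
  | alt _ _ ihp ihq => exact ihp.alt ihq
  | seq _ _ ihp ihq => exact ihp.seq ihq
  | iter _ _ ihp ihq => exact ihp.iter ihq
  | par _ _ ihp ihq => exact ihp.par ihq
  | lmerge _ q ihp _ => exact ihp.lmerge q
  | cmerge _ _ ihp ihq => exact ihp.cmerge ihq
  | encap H _ ihp => exact ihp.encap H
  | gc φ _ ihp => exact ihp.gc φ
  | eval ρ _ ihp => exact ihp.eval ρ

/-- Lemma 1 of the paper: for every closed term `p` of sort
`Proc` of deACPei, there exists a head normal form `q` such that the equation
`p = q` is derivable from the axioms of deACPei. -/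
theorem exists_head_normal_form {A V D : Type} [Finite A] [Countable V]
    [Nonempty D] (γ : A → A → Option A) (hγ : GammaOK γ) :
    ∀ p : P A V D, ∃ q : P A V D, HNF q ∧ Deriv γ p q :=
  exists_head_normal_form_general γ

end DeACPei
end

section
/- Bisimulation equivalence on closed process terms of deACPei is a congruence with respect to all operators of deACPei whose result sort is Proc and that have at least one argument of sort Proc: for all closed process terms t1, t1′, t2, t2′ and every closed condition term φ, if t1 ↔ t2 and t1′ ↔ t2′, then t1 + t1′ ↔ t2 + t2′, t1 · t1′ ↔ t2 · t2′, t1 ⋆ t1′ ↔ t2 ⋆ t2′, t1 ∥ t1′ ↔ t2 ∥ t2′, t1 ⌊⌊ t1′ ↔ t2 ⌊⌊ t2′, t1 | t1′ ↔ t2 | t2′, ∂_H(t1) ↔ ∂_H(t2), φ :→ t1 ↔ φ :→ t2, and V_σ(t1) ↔ V_σ(t2) for every flexible variable valuation σ. -/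
namespace DeACPei

/-!
The closure of bisimilarity under all operators with a process argument is itself a
bisimulation. Each transition rule of deACPei derives a step of a composite term from steps of
its arguments with the same label (and from their termination), and rebuilds the residual by
operators from residuals and arguments; so a step of one side of the closure is matched, rule by
rule, by the other side, with residuals again in the closure. Labels can be matched exactly, and
the closure is symmetric, so this one-sided simulation is already a bisimulation.
-/

variable {A V D : Type} {γ : A → A → Option A}

/-- Data terms are modelled by their denotations, so data equivalence is equality. -/
theorem dataEq_iff {α β : Atom A V D} : DataEq α β ↔ α = β := by
  constructor
  · intro h
    cases h with
    | basic => rfl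
    | @param _ e e' es es' he hes =>
        obtain rfl : e = e' := funext he
        obtain rfl : es = es' := by
          rw [← List.forall₂_eq_eq_eq]; exact hes.imp fun _ _ => funext
        rfl
    | assign he => rw [funext he]
  · rintro rfl
    cases α with
    | basic => exact .basic
    | param => exact .param (fun _ => rfl) (List.forall₂_same.2 fun _ _ _ => rfl)
    | assign => exact .assign fun _ => rfl

def Transfers (γ : A → A → Option A) (S : P A V D → P A V D → Prop)
    (t₁ t₂ : P A V D) : Prop :=
  ∀ {ρ α t₁'}, Step γ t₁ ρ α t₁' → ∃ t₂', Step γ t₂ ρ α t₂' ∧ S t₁' t₂'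

def TermImp (t₁ t₂ : P A V D) : Prop :=
  ∀ ρ, Term t₁ ρ → Term t₂ ρ

def IsSimulation (γ : A → A → Option A) (R : P A V D → P A V D → Prop) : Prop :=
  ∀ ⦃t₁ t₂⦄, R t₁ t₂ → Transfers γ R t₁ t₂ ∧ TermImp t₁ t₂

theorem IsBisim.isSimulation {R : P A V D → P A V D → Prop} (hR : IsBisim γ R) :
    IsSimulation γ R := by
  intro t₁ t₂ h
  obtain ⟨hfwd, -, hterm⟩ := hR t₁ t₂ h
  refine ⟨fun hs => ?_, fun ρ => (hterm ρ).1⟩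
  obtain ⟨α', t₂', hα, hs', h'⟩ := hfwd _ _ _ hs
  exact ⟨t₂', dataEq_iff.1 hα ▸ hs', h'⟩

theorem IsSimulation.isBisim {R : P A V D → P A V D → Prop} (hR : IsSimulation γ R)
    (hsymm : ∀ ⦃x y⦄, R x y → R y x) : IsBisim γ R := by
  intro t₁ t₂ h
  refine ⟨fun ρ α t₁' hs => ?_, fun ρ α t₂' hs => ?_,
    fun ρ => ⟨(hR h).2 ρ, (hR (hsymm h)).2 ρ⟩⟩
  · obtain ⟨t₂', hs', h'⟩ := (hR h).1 hs
    exact ⟨α, t₂', dataEq_iff.2 rfl, hs', h'⟩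
  · obtain ⟨t₁', hs', h'⟩ := (hR (hsymm h)).1 hs
    exact ⟨α, t₁', dataEq_iff.2 rfl, hs', hsymm h'⟩

theorem Bisim.symm {t₁ t₂ : P A V D} (h : Bisim γ t₁ t₂) : Bisim γ t₂ t₁ := by
  obtain ⟨R, hR, h⟩ := h
  refine ⟨flip R, fun t₂ t₁ h => ?_, h⟩
  obtain ⟨hfwd, hbwd, hterm⟩ := hR t₁ t₂ h
  exact ⟨hbwd, hfwd, fun ρ => (hterm ρ).symm⟩

theorem bisim_isSimulation : IsSimulation γ (Bisim (A := A) (V := V) (D := D) γ) := by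
  rintro t₁ t₂ ⟨R, hR, h⟩
  obtain ⟨hstep, hterm⟩ := hR.isSimulation h
  refine ⟨fun hs => ?_, hterm⟩
  obtain ⟨t₂', hs', h'⟩ := hstep hs
  exact ⟨t₂', hs', R, hR, h'⟩

inductive CongrClosure (R : P A V D → P A V D → Prop) : P A V D → P A V D → Prop where
  | base {x y} : R x y → CongrClosure R x y
  | alt {x y x' y'} : CongrClosure R x x' → CongrClosure R y y' →
      CongrClosure R (.alt x y) (.alt x' y')
  | seq {x y x' y'} : CongrClosure R x x' → CongrClosure R y y' →
      CongrClosure R (.seq x y) (.seq x' y')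
  | iter {x y x' y'} : CongrClosure R x x' → CongrClosure R y y' →
      CongrClosure R (.iter x y) (.iter x' y')
  | par {x y x' y'} : CongrClosure R x x' → CongrClosure R y y' →
      CongrClosure R (.par x y) (.par x' y')
  | lmerge {x y x' y'} : CongrClosure R x x' → CongrClosure R y y' →
      CongrClosure R (.lmerge x y) (.lmerge x' y')
  | cmerge {x y x' y'} : CongrClosure R x x' → CongrClosure R y y' →
      CongrClosure R (.cmerge x y) (.cmerge x' y')
  | encap {x y} (H : Set A) : CongrClosure R x y → CongrClosure R (.encap H x) (.encap H y)
  | gc {x y} (φ : Cond V D) : CongrClosure R x y → CongrClosure R (.gc φ x) (.gc φ y)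
  | eval {x y} (ρ : Val V D) : CongrClosure R x y → CongrClosure R (.eval ρ x) (.eval ρ y)

namespace CongrClosure

variable {R : P A V D → P A V D → Prop}

theorem symm (hR : ∀ ⦃x y⦄, R x y → R y x) ⦃x y : P A V D⦄ (h : CongrClosure R x y) :
    CongrClosure R y x := by
  induction h with
  | base h => exact .base (hR h)
  | alt _ _ ih ih' => exact .alt ih ih'
  | seq _ _ ih ih' => exact .seq ih ih'
  | iter _ _ ih ih' => exact .iter ih ih'
  | par _ _ ih ih' => exact .par ih ih'
  | lmerge _ _ ih ih' => exact .lmerge ih ih'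
  | cmerge _ _ ih ih' => exact .cmerge ih ih'
  | encap H _ ih => exact .encap H ih
  | gc φ _ ih => exact .gc φ ih
  | eval ρ _ ih => exact .eval ρ ih

theorem termImp (hR : ∀ ⦃x y⦄, R x y → TermImp x y) {x y : P A V D}
    (h : CongrClosure R x y) : TermImp x y := by
  induction h with
  | base h => exact hR h
  | alt _ _ ih ih' =>
      intro ρ ht
      cases ht with
      | altL ht => exact .altL (ih ρ ht)
      | altR ht => exact .altR (ih' ρ ht)
  | seq _ _ ih ih' =>
      intro ρ ht
      cases ht with | seq ht ht' => exact .seq (ih ρ ht) (ih' ρ ht')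
  | iter _ _ _ ih' => intro ρ ht; cases ht with | iter ht => exact .iter (ih' ρ ht)
  | par _ _ ih ih' =>
      intro ρ ht
      cases ht with | par ht ht' => exact .par (ih ρ ht) (ih' ρ ht')
  | lmerge | cmerge => intro ρ ht; cases ht
  | encap _ _ ih => intro ρ ht; cases ht with | encap ht => exact .encap (ih ρ ht)
  | gc _ _ ih => intro ρ ht; cases ht with | gc hφ ht => exact .gc hφ (ih ρ ht)
  | eval _ _ ih => intro ρ ht; cases ht with | eval ht => exact .eval (ih _ ht)

end CongrClosure

namespace Transfers

variable {S R : P A V D → P A V D → Prop} {x y x' y' : P A V D}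

theorem alt (hx : Transfers γ S x x') (hy : Transfers γ S y y') :
    Transfers γ S (.alt x y) (.alt x' y') := by
  intro ρ α t hs
  cases hs with
  | altL hs => obtain ⟨t', hs', h⟩ := hx hs; exact ⟨t', .altL hs', h⟩
  | altR hs => obtain ⟨t', hs', h⟩ := hy hs; exact ⟨t', .altR hs', h⟩

theorem seq (hyy : CongrClosure R y y') (hxterm : TermImp x x')
    (hx : Transfers γ (CongrClosure R) x x') (hy : Transfers γ (CongrClosure R) y y') :
    Transfers γ (CongrClosure R) (.seq x y) (.seq x' y') := by
  intro ρ α t hs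
  cases hs with
  | seqL hs => obtain ⟨t', hs', h⟩ := hx hs; exact ⟨_, .seqL hs', .seq h hyy⟩
  | seqR ht hs => obtain ⟨t', hs', h⟩ := hy hs; exact ⟨t', .seqR (hxterm ρ ht) hs', h⟩

theorem iter (hxx : CongrClosure R x x') (hyy : CongrClosure R y y')
    (hx : Transfers γ (CongrClosure R) x x') (hy : Transfers γ (CongrClosure R) y y') :
    Transfers γ (CongrClosure R) (.iter x y) (.iter x' y') := by
  intro ρ α t hs
  cases hs with
  | iterExit hs => obtain ⟨t', hs', h⟩ := hy hs; exact ⟨t', .iterExit hs', h⟩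
  | iterLoop hs =>
      obtain ⟨t', hs', h⟩ := hx hs
      exact ⟨_, .iterLoop hs', .seq h (.iter hxx hyy)⟩

theorem par (hxx : CongrClosure R x x') (hyy : CongrClosure R y y')
    (hx : Transfers γ (CongrClosure R) x x') (hy : Transfers γ (CongrClosure R) y y') :
    Transfers γ (CongrClosure R) (.par x y) (.par x' y') := by
  intro ρ α t hs
  cases hs with
  | parL hs => obtain ⟨t', hs', h⟩ := hx hs; exact ⟨_, .parL hs', .par h hyy⟩
  | parR hs => obtain ⟨t', hs', h⟩ := hy hs; exact ⟨_, .parR hs', .par hxx h⟩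
  | parC hs₁ hs₂ hc =>
      obtain ⟨t₁, hs₁', h₁⟩ := hx hs₁
      obtain ⟨t₂, hs₂', h₂⟩ := hy hs₂
      exact ⟨_, .parC hs₁' hs₂' hc, .par h₁ h₂⟩
  | parCD hs₁ hs₂ hc he hes =>
      obtain ⟨t₁, hs₁', h₁⟩ := hx hs₁
      obtain ⟨t₂, hs₂', h₂⟩ := hy hs₂
      exact ⟨_, .parCD hs₁' hs₂' hc he hes, .par h₁ h₂⟩

theorem lmerge (hyy : CongrClosure R y y')
    (hx : Transfers γ (CongrClosure R) x x') :
    Transfers γ (CongrClosure R) (.lmerge x y) (.lmerge x' y') := by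
  intro ρ α t hs
  cases hs with
  | lmerge hs => obtain ⟨t', hs', h⟩ := hx hs; exact ⟨_, .lmerge hs', .par h hyy⟩

theorem cmerge (hx : Transfers γ (CongrClosure R) x x')
    (hy : Transfers γ (CongrClosure R) y y') :
    Transfers γ (CongrClosure R) (.cmerge x y) (.cmerge x' y') := by
  intro ρ α t hs
  cases hs with
  | cmergeC hs₁ hs₂ hc =>
      obtain ⟨t₁, hs₁', h₁⟩ := hx hs₁
      obtain ⟨t₂, hs₂', h₂⟩ := hy hs₂
      exact ⟨_, .cmergeC hs₁' hs₂' hc, .par h₁ h₂⟩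
  | cmergeCD hs₁ hs₂ hc he hes =>
      obtain ⟨t₁, hs₁', h₁⟩ := hx hs₁
      obtain ⟨t₂, hs₂', h₂⟩ := hy hs₂
      exact ⟨_, .cmergeCD hs₁' hs₂' hc he hes, .par h₁ h₂⟩

theorem encap (H : Set A) (hx : Transfers γ (CongrClosure R) x x') :
    Transfers γ (CongrClosure R) (.encap H x) (.encap H x') := by
  intro ρ α t hs
  cases hs with
  | encapB hs ha => obtain ⟨t', hs', h⟩ := hx hs; exact ⟨_, .encapB hs' ha, .encap H h⟩
  | encapP hs ha => obtain ⟨t', hs', h⟩ := hx hs; exact ⟨_, .encapP hs' ha, .encap H h⟩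
  | encapA hs => obtain ⟨t', hs', h⟩ := hx hs; exact ⟨_, .encapA hs', .encap H h⟩

theorem gc (φ : Cond V D) (hx : Transfers γ S x x') :
    Transfers γ S (.gc φ x) (.gc φ x') := by
  intro ρ α t hs
  cases hs with
  | gc hφ hs => obtain ⟨t', hs', h⟩ := hx hs; exact ⟨t', .gc hφ hs', h⟩

theorem eval (σ : Val V D) (hx : Transfers γ (CongrClosure R) x x') :
    Transfers γ (CongrClosure R) (.eval σ x) (.eval σ x') := by
  intro ρ α t hs
  cases hs with
  | evalB hs => obtain ⟨t', hs', h⟩ := hx hs; exact ⟨_, .evalB hs', .eval σ h⟩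
  | evalP hs => obtain ⟨t', hs', h⟩ := hx hs; exact ⟨_, .evalP hs', .eval σ h⟩
  | evalA hs => obtain ⟨t', hs', h⟩ := hx hs; exact ⟨_, .evalA hs', .eval _ h⟩

end Transfers

namespace CongrClosure

variable {R : P A V D → P A V D → Prop}

theorem isSimulation (hR : IsSimulation γ R) : IsSimulation γ (CongrClosure R) := by
  intro x y h
  refine ⟨?_, h.termImp fun _ _ h => (hR h).2⟩
  induction h with
  | base h =>
      intro ρ α t hs
      obtain ⟨t', hs', h'⟩ := (hR h).1 hs
      exact ⟨t', hs', .base h'⟩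
  | alt _ _ ihx ihy => exact Transfers.alt ihx ihy
  | seq hxx hyy ihx ihy =>
      exact Transfers.seq hyy (hxx.termImp fun _ _ h => (hR h).2) ihx ihy
  | iter hxx hyy ihx ihy => exact Transfers.iter hxx hyy ihx ihy
  | par hxx hyy ihx ihy => exact Transfers.par hxx hyy ihx ihy
  | lmerge _ hyy ihx => exact Transfers.lmerge hyy ihx
  | cmerge _ _ ihx ihy => exact Transfers.cmerge ihx ihy
  | encap H _ ihx => exact Transfers.encap H ihx
  | gc φ _ ihx => exact Transfers.gc φ ihx
  | eval σ _ ihx => exact Transfers.eval σ ihx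

end CongrClosure

theorem isBisim_congrClosure_bisim :
    IsBisim γ (CongrClosure (Bisim (A := A) (V := V) (D := D) γ)) :=
  (CongrClosure.isSimulation bisim_isSimulation).isBisim
    (CongrClosure.symm fun _ _ => Bisim.symm)

theorem Bisim.of_congrClosure {x y : P A V D} (h : CongrClosure (Bisim γ) x y) :
    Bisim γ x y :=
  ⟨_, isBisim_congrClosure_bisim, h⟩

theorem bisim_congruence_general {A V D : Type} (γ : A → A → Option A) :
    ∀ (t1 t1' t2 t2' : P A V D) (φ : Cond V D),
      Bisim γ t1 t2 → Bisim γ t1' t2' →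
      Bisim γ (.alt t1 t1') (.alt t2 t2') ∧
      Bisim γ (.seq t1 t1') (.seq t2 t2') ∧
      Bisim γ (.iter t1 t1') (.iter t2 t2') ∧
      Bisim γ (.par t1 t1') (.par t2 t2') ∧
      Bisim γ (.lmerge t1 t1') (.lmerge t2 t2') ∧
      Bisim γ (.cmerge t1 t1') (.cmerge t2 t2') ∧
      (∀ H : Set A, Bisim γ (.encap H t1) (.encap H t2)) ∧
      Bisim γ (.gc φ t1) (.gc φ t2) ∧
      (∀ σ : Val V D, Bisim γ (.eval σ t1) (.eval σ t2)) := by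
  intro t1 t1' t2 t2' φ h h'
  have c : CongrClosure (Bisim γ) t1 t2 := .base h
  have c' : CongrClosure (Bisim γ) t1' t2' := .base h'
  exact ⟨.of_congrClosure (.alt c c'), .of_congrClosure (.seq c c'),
    .of_congrClosure (.iter c c'), .of_congrClosure (.par c c'),
    .of_congrClosure (.lmerge c c'), .of_congrClosure (.cmerge c c'),
    fun H => .of_congrClosure (.encap H c), .of_congrClosure (.gc φ c),
    fun σ => .of_congrClosure (.eval σ c)⟩

/-- Proposition 2 of the paper: bisimulation equivalence on
closed process terms of deACPei is a congruence with respect to all operators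
of deACPei whose result sort is `Proc` and that have at least one argument of
sort `Proc`. -/
theorem bisim_congruence {A V D : Type} [Finite A] [Countable V] [Nonempty D]
    (γ : A → A → Option A) (hγ : GammaOK γ) :
    ∀ (t1 t1' t2 t2' : P A V D) (φ : Cond V D),
      Bisim γ t1 t2 → Bisim γ t1' t2' →
      Bisim γ (.alt t1 t1') (.alt t2 t2') ∧
      Bisim γ (.seq t1 t1') (.seq t2 t2') ∧
      Bisim γ (.iter t1 t1') (.iter t2 t2') ∧
      Bisim γ (.par t1 t1') (.par t2 t2') ∧
      Bisim γ (.lmerge t1 t1') (.lmerge t2 t2') ∧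
      Bisim γ (.cmerge t1 t1') (.cmerge t2 t2') ∧
      (∀ H : Set A, Bisim γ (.encap H t1) (.encap H t2)) ∧
      Bisim γ (.gc φ t1) (.gc φ t2) ∧
      (∀ σ : Val V D, Bisim γ (.eval σ t1) (.eval σ t2)) :=
  bisim_congruence_general γ

end DeACPei
end

section
/- Let p′ and p″ be evaluation-free, auxiliary-operator-free closed process terms of deACPei, and let σ be a computation of some such term p. Then σ is a computation of p′ ∥ p″ if and only if there exist a computation σ′ of p′ and a computation σ″ of p″ such that σ, σ′, and σ″ conjoin (σ ∝ σ′ ∥ σ″). -/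
/-!
By inversion of the operational rules, a step of `x ∥ y` is a step of `x` alone, a step of
`y` alone, or a communication of a step of each; in the last case axiom CM7 (resp. CM7Da)
derives the communication merge of the two actions to the communicated one. So every
process term along a computation of `p′ ∥ p″` is a parallel composition, and splitting it
componentwise, with the labels of the components chosen step by step, gives computations
of `p′` and `p″` that conjoin with it. Conversely, conjunction fixes the first process
term to be `p′ ∥ p″`.
-/

namespace DeACPei

variable {A V D : Type} {γ : A → A → Option A}

namespace Deriv

lemma gc_of_forall {φ : Cond V D} (x : P A V D) (h : ∀ ρ, φ ρ) :
    Deriv γ (.gc φ x) x := by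
  have hφ : φ = fun _ => True := funext fun ρ => eq_true (h ρ)
  exact hφ ▸ .ax (.gc1 x)

lemma par_eps_eps : Deriv γ (P.par (A := A) (V := V) (D := D) .eps .eps) .eps := by
  have hl : Deriv γ (P.lmerge (A := A) (V := V) (D := D) .eps .eps) .delta := .ax (.cm2e _)
  have hc : Deriv γ (P.cmerge (A := A) (V := V) (D := D) .eps .eps) .delta := .ax (.cm5e _)
  have he : Deriv γ (P.seq (.encap Set.univ (P.eps (A := A) (V := V) (D := D)))
      (.encap Set.univ .eps)) .eps :=
    .trans (.seqC (.ax (.d0 _)) (.ax (.d0 _))) (.ax (.a9 _))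
  refine .trans (.ax (.cm1e _ _)) (.trans (.altC (.altC (.altC hl hl) hc) he) ?_)
  refine .trans (.altC (.altC (.ax (.a3 _)) (.refl _)) (.refl _)) ?_
  exact .trans (.altC (.ax (.a3 _)) (.refl _)) (.trans (.ax (.a1 _ _)) (.ax (.a6 _)))

lemma cmerge_atom_of_seq_eps {α' α'' β : Atom A V D}
    (h : Deriv γ (.cmerge (.seq (.atom α') .eps) (.seq (.atom α'') .eps))
      (.seq (.atom β) (.par .eps .eps))) :
    Deriv γ (.cmerge (.atom α') (.atom α'')) (.atom β) :=
  .trans (.cmergeC (.symm (.ax (.a8 _))) (.symm (.ax (.a8 _))))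
    (.trans h (.trans (.seqC (.refl _) par_eps_eps) (.ax (.a8 _))))

lemma cmerge_basic {a b c : A} (hc : γ a b = some c) :
    Deriv γ (.cmerge (.atom (.basic a)) (.atom (.basic b)))
      (P.atom (A := A) (V := V) (D := D) (.basic c)) := by
  apply cmerge_atom_of_seq_eps
  have h : Deriv γ (.cmerge (.seq (ofOptA (some a)) .eps) (.seq (ofOptA (some b)) .eps))
      (.seq (ofOptA (V := V) (D := D) (γe γ (some a) (some b))) (.par .eps .eps)) :=
    .ax (.cm7 _ _ _ _)
  simpa only [ofOptA, γe, hc] using h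

lemma cmerge_param {a b c : A} {e e' : Expr V D} {es es' : List (Expr V D)}
    (hc : γ a b = some c) (hlen : es.length = es'.length) (he : ∀ ρ, e ρ = e' ρ)
    (hes : ∀ ρ, List.Forall₂ (fun (f g : Expr V D) => f ρ = g ρ) es es') :
    Deriv γ (.cmerge (.atom (.param a e es)) (.atom (.param b e' es')))
      (.atom (.param c e es)) :=
  cmerge_atom_of_seq_eps <| .trans (.ax (Ax.cm7da _ _ hc hlen))
    (gc_of_forall _ fun ρ => ⟨he ρ, hes ρ⟩)

end Deriv

def ConjoinLab (γ : A → A → Option A) (l l' l'' : Lab A V D) : Prop :=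
  (l' ≠ .env ∧ l'' = .env ∧ l = l') ∨
  (l' = .env ∧ l'' ≠ .env ∧ l = l'') ∨
  (l' = .env ∧ l'' = .env ∧ l = .env) ∨
  ∃ α' α'' β : Atom A V D, l' = .act α' ∧ l'' = .act α'' ∧ l = .act β ∧
    Deriv γ (.cmerge (.atom α') (.atom α'')) (.atom β)

lemma rStep_par_inv {x y q : P A V D} {ρ ρ' : Val V D} {α : Atom A V D}
    (h : RStep γ (.par x y) ρ α q ρ') :
    (∃ x', q = .par x' y ∧ RStep γ x ρ α x' ρ') ∨
    (∃ y', q = .par x y' ∧ RStep γ y ρ α y' ρ') ∨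
    (∃ x' y' α' α'', q = .par x' y' ∧ ρ' = ρ ∧
      RStep γ x ρ α' x' ρ ∧ RStep γ y ρ α'' y' ρ ∧
      Deriv γ (.cmerge (.atom α') (.atom α'')) (.atom α)) := by
  cases h ρ with
  | evalB hst =>
    cases hst with
    | parL hx => exact .inl ⟨_, rfl, fun _ => .evalB hx⟩
    | parR hy => exact .inr (.inl ⟨_, rfl, fun _ => .evalB hy⟩)
    | parC hx hy hc =>
      exact .inr (.inr ⟨_, _, _, _, rfl, rfl, fun _ => .evalB hx, fun _ => .evalB hy,
        Deriv.cmerge_basic hc⟩)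
  | evalP hst =>
    cases hst with
    | parL hx => exact .inl ⟨_, rfl, fun _ => .evalP hx⟩
    | parR hy => exact .inr (.inl ⟨_, rfl, fun _ => .evalP hy⟩)
    | parCD hx hy hc hee hes =>
      refine .inr (.inr ⟨_, _, _, _, rfl, rfl, fun _ => .evalP hx, fun _ => .evalP hy, ?_⟩)
      -- the data terms of evaluated actions are constant, so the guard of CM7Da holds everywhere
      refine Deriv.cmerge_param hc (by simpa using hes.length_eq) (fun _ => hee) fun _ => ?_
      rw [List.forall₂_map_right_iff, List.forall₂_map_left_iff]
      exact hes
  | evalA hst =>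
    cases hst with
    | parL hx => exact .inl ⟨_, rfl, fun _ => .evalA hx⟩
    | parR hy => exact .inr (.inl ⟨_, rfl, fun _ => .evalA hy⟩)

lemma stepL_par_inv {x y q : P A V D} {ρ ρ' : Val V D} {l : Lab A V D}
    (h : StepL γ (.par x y) ρ l q ρ') :
    ∃ x' y' l' l'', q = .par x' y' ∧ StepL γ x ρ l' x' ρ' ∧ StepL γ y ρ l'' y' ρ' ∧
      ConjoinLab γ l l' l'' := by
  cases l with
  | env => exact ⟨x, y, .env, .env, h, rfl, rfl, .inr (.inr (.inl ⟨rfl, rfl, rfl⟩))⟩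
  | act α =>
    rcases rStep_par_inv h with ⟨x', rfl, hx⟩ | ⟨y', rfl, hy⟩ |
      ⟨x', y', α', α'', rfl, rfl, hx, hy, hd⟩
    · exact ⟨x', y, .act α, .env, rfl, hx, rfl, .inl ⟨nofun, rfl, rfl⟩⟩
    · exact ⟨x, y', .env, .act α, rfl, rfl, hy, .inr (.inl ⟨rfl, nofun, rfl⟩)⟩
    · exact ⟨x', y', .act α', .act α'', rfl, hx, hy,
        .inr (.inr (.inr ⟨α', α'', α, rfl, rfl, rfl, hd⟩))⟩

def P.parLeft : P A V D → P A V D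
  | .par x _ => x
  | p => p

def P.parRight : P A V D → P A V D
  | .par _ y => y
  | p => p

namespace Comp

lemma proc_isPar_of_isOf_par {σ : Comp (A := A) (V := V) (D := D) γ} {p' p'' : P A V D}
    (h : σ.isOf (.par p' p'')) :
    ∀ i ≤ σ.n, σ.proc i = .par (σ.proc i).parLeft (σ.proc i).parRight := by
  intro i
  induction i with
  | zero => intro _; rw [show σ.proc 0 = _ from h]; rfl
  | succ i ih =>
    intro hi
    have hstep := σ.step i hi
    rw [ih (by omega)] at hstep
    obtain ⟨x', y', -, -, hq, -⟩ := stepL_par_inv hstep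
    rw [hq]; rfl

lemma exists_conjoin_of_isOf_par {σ : Comp (A := A) (V := V) (D := D) γ} {p' p'' : P A V D}
    (h : σ.isOf (.par p' p'')) :
    ∃ σ' σ'' : Comp (A := A) (V := V) (D := D) γ,
      σ'.isOf p' ∧ σ''.isOf p'' ∧ Conjoin γ σ σ' σ'' := by
  have hpar := proc_isPar_of_isOf_par h
  have hsplit : ∀ i, ∃ l : Lab A V D × Lab A V D, i < σ.n →
      StepL γ (σ.proc i).parLeft (σ.val i) l.1 (σ.proc (i + 1)).parLeft (σ.val (i + 1)) ∧
      StepL γ (σ.proc i).parRight (σ.val i) l.2 (σ.proc (i + 1)).parRight (σ.val (i + 1)) ∧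
      ConjoinLab γ (σ.lab i) l.1 l.2 := by
    intro i
    by_cases hi : i < σ.n
    · have hstep := σ.step i hi
      rw [hpar i hi.le] at hstep
      obtain ⟨x', y', l', l'', hq, hx, hy, hl⟩ := stepL_par_inv hstep
      rw [hq]
      exact ⟨(l', l''), fun _ => ⟨hx, hy, hl⟩⟩
    · exact ⟨(.env, .env), fun h => absurd h hi⟩
  choose lab2 hlab2 using hsplit
  refine ⟨⟨σ.n, fun i => (σ.proc i).parLeft, σ.val, fun i => (lab2 i).1,
      fun i hi => (hlab2 i hi).1⟩,
    ⟨σ.n, fun i => (σ.proc i).parRight, σ.val, fun i => (lab2 i).2,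
      fun i hi => (hlab2 i hi).2.1⟩, ?_, ?_,
    rfl, rfl, hpar, fun _ _ => ⟨rfl, rfl⟩, fun i hi => (hlab2 i hi).2.2⟩
  all_goals simp only [isOf, show σ.proc 0 = _ from h]; rfl

lemma isOf_par_of_conjoin {σ σ' σ'' : Comp (A := A) (V := V) (D := D) γ} {p' p'' : P A V D}
    (hc : Conjoin γ σ σ' σ'') (h' : σ'.isOf p') (h'' : σ''.isOf p'') :
    σ.isOf (.par p' p'') := by
  rw [isOf, hc.2.2.1 0 (Nat.zero_le _), h', h'']

end Comp

theorem comp_par_iff_conjoin_general {A V D : Type} (γ : A → A → Option A) :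
    ∀ p' p'' : P A V D, RGTerm p' → RGTerm p'' →
      ∀ σ : Comp (A := A) (V := V) (D := D) γ,
        (∃ p : P A V D, RGTerm p ∧ σ.isOf p) →
        (σ.isOf (.par p' p'') ↔
          ∃ σ' σ'' : Comp (A := A) (V := V) (D := D) γ,
            σ'.isOf p' ∧ σ''.isOf p'' ∧ Conjoin γ σ σ' σ'') := by
  intro p' p'' _ _ σ _
  constructor
  · exact Comp.exists_conjoin_of_isOf_par
  · rintro ⟨σ', σ'', h', h'', hc⟩
    exact Comp.isOf_par_of_conjoin hc h' h''

/-- Lemma 3 of the paper: let `p′` and `p″` be evaluation-free,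
auxiliary-operator-free closed process terms of deACPei, and let `σ` be a
computation of some such term `p`.  Then `σ` is a computation of `p′ ∥ p″` if
and only if there exist a computation `σ′` of `p′` and a computation `σ″` of
`p″` such that `σ`, `σ′`, and `σ″` conjoin (`σ ∝ σ′ ∥ σ″`). -/
theorem comp_par_iff_conjoin {A V D : Type} [Finite A] [Countable V]
    [Nonempty D] (γ : A → A → Option A) (hγ : GammaOK γ) :
    ∀ p' p'' : P A V D, RGTerm p' → RGTerm p'' →
      ∀ σ : Comp (A := A) (V := V) (D := D) γ,
        (∃ p : P A V D, RGTerm p ∧ σ.isOf p) →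
        (σ.isOf (.par p' p'') ↔
          ∃ σ' σ'' : Comp (A := A) (V := V) (D := D) γ,
            σ'.isOf p' ∧ σ''.isOf p'' ∧ Conjoin γ σ σ' σ'') :=
  comp_par_iff_conjoin_general γ

end DeACPei
end
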